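/- arXiv:2203.10700 — 7 statements merged into one kernel-verified Lean document; each statement's English description precedes it below -/
import Mathlib

section
/- Let $T \in (0, \infty]$, let $p : \mathbb{R}^3 \to \mathbb{R}$ be measurable with $3 \le p^- \le p(x) \le p^+ < \infty$ for a.e. $x$, and let $V : (0,T) \times \mathbb{R}^3 \to \mathbb{R}^{3\times 3}$ be measurable. Define $G(t,x) = \big((1+|V(t,x)|^2)^{(p(x)-2)/2} - 1\big) V(t,x)$. If the three quantities $M_1 = \int_0^T\!\!\int_{\mathbb{R}^3} (1+|V|^2)^{(p(x)-2)/2} |V|^2 \,dx\,dt$, $M_2 = \int_0^T\!\!\int_{\mathbb{R}^3} |V|^2 \,dx\,dt$ and $M_3 = \int_0^T\!\!\int_{\mathbb{R}^3} |V|^{p^-} \,dx\,dt$ are finite, then $\int_0^T\!\!\int_{\mathbb{R}^3} |G(t,x)| \,dx\,dt \le C$ for a constant $C$ depending only on $p^-$, $p^+$, $M_1$, $M_2$ and $M_3$. -/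
/-!
Pointwise, with `α = (p(x) - 2)/2 ≥ 0` and `n = |V|`, one has
`((1 + n²)^α - 1) n ≤ max 1 α · (1 + n²)^α n²`: for `n ≥ 1` drop the `-1` and use `n ≤ n²`,
for `n ≤ 1` use `(1 + n²)^α - 1 ≤ α n² (1 + n²)^α` and `n³ ≤ n²`. Since `α ≤ (p⁺ - 2)/2`,
integrating gives `∬ |G| ≤ max 1 ((p⁺ - 2)/2) · M₁`.
-/

open MeasureTheory
open scoped ENNReal

namespace Real

theorem exp_sub_one_le_mul_exp (t : ℝ) : exp t - 1 ≤ t * exp t := by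
  have h := mul_le_mul_of_nonneg_left (add_one_le_exp (-t)) (exp_pos t).le
  rw [← exp_add, add_neg_cancel, exp_zero] at h
  linarith

theorem rpow_sub_one_le_mul_sub_one_mul_rpow {x α : ℝ} (hx : 0 < x) (hα : 0 ≤ α) :
    x ^ α - 1 ≤ α * (x - 1) * x ^ α := by
  have h := exp_sub_one_le_mul_exp (log x * α)
  rw [← rpow_def_of_pos hx] at h
  have hlog : log x * α ≤ (x - 1) * α := mul_le_mul_of_nonneg_right (log_le_sub_one_of_pos hx) hα
  nlinarith [rpow_nonneg hx.le α]

end Real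

theorem norm_one_add_sq_rpow_sub_one_smul_le {E : Type*} [SeminormedAddCommGroup E]
    [NormedSpace ℝ E] (v : E) {α : ℝ} (hα : 0 ≤ α) :
    ‖((1 + ‖v‖ ^ 2) ^ α - 1) • v‖ ≤ max 1 α * ((1 + ‖v‖ ^ 2) ^ α * ‖v‖ ^ 2) := by
  set n := ‖v‖
  set A := (1 + n ^ 2) ^ α
  have hn : 0 ≤ n := norm_nonneg v
  have hA : 1 ≤ A := Real.one_le_rpow (by nlinarith) hα
  have hAn : 0 ≤ A * n ^ 2 := by positivity
  rw [norm_smul, Real.norm_of_nonneg (by linarith)]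
  rcases le_total n 1 with hn1 | hn1
  · have hsub : A - 1 ≤ α * n ^ 2 * A := by
      have h := Real.rpow_sub_one_le_mul_sub_one_mul_rpow (x := 1 + n ^ 2) (by positivity) hα
      rwa [add_sub_cancel_left] at h
    calc (A - 1) * n ≤ α * n ^ 2 * A * 1 :=
          mul_le_mul hsub hn1 hn (by positivity)
      _ = α * (A * n ^ 2) := by ring
      _ ≤ max 1 α * (A * n ^ 2) := mul_le_mul_of_nonneg_right (le_max_right 1 α) hAn
  · calc (A - 1) * n ≤ A * n ^ 2 := by nlinarith
      _ = 1 * (A * n ^ 2) := (one_mul _).symm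
      _ ≤ max 1 α * (A * n ^ 2) := mul_le_mul_of_nonneg_right (le_max_left 1 α) hAn

theorem perturbation_L1_bound_case1_general (pminus pplus : ℝ) (hpm : 3 ≤ pminus)
    (M1 M2 M3 : ℝ≥0∞) (hM1 : M1 < ⊤) :
    ∃ C : ℝ≥0∞, C < ⊤ ∧
      ∀ (T : ℝ≥0∞), 0 < T →
      ∀ (p : EuclideanSpace ℝ (Fin 3) → ℝ), Measurable p →
        (∀ᵐ x ∂(volume : Measure (EuclideanSpace ℝ (Fin 3))), pminus ≤ p x ∧ p x ≤ pplus) →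
      ∀ (V : ℝ × EuclideanSpace ℝ (Fin 3) → EuclideanSpace ℝ (Fin (3 * 3))), Measurable V →
        (∫⁻ z in {z : ℝ × EuclideanSpace ℝ (Fin 3) | 0 < z.1 ∧ ENNReal.ofReal z.1 < T},
            ENNReal.ofReal ((1 + ‖V z‖ ^ 2) ^ ((p z.2 - 2) / 2) * ‖V z‖ ^ 2)) ≤ M1 →
        (∫⁻ z in {z : ℝ × EuclideanSpace ℝ (Fin 3) | 0 < z.1 ∧ ENNReal.ofReal z.1 < T},
            ENNReal.ofReal (‖V z‖ ^ 2)) ≤ M2 →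
        (∫⁻ z in {z : ℝ × EuclideanSpace ℝ (Fin 3) | 0 < z.1 ∧ ENNReal.ofReal z.1 < T},
            ENNReal.ofReal (‖V z‖ ^ pminus)) ≤ M3 →
        (∫⁻ z in {z : ℝ × EuclideanSpace ℝ (Fin 3) | 0 < z.1 ∧ ENNReal.ofReal z.1 < T},
            ENNReal.ofReal ‖((1 + ‖V z‖ ^ 2) ^ ((p z.2 - 2) / 2) - 1) • V z‖) ≤ C := by
  set K := max 1 ((pplus - 2) / 2)
  refine ⟨ENNReal.ofReal K * M1, ENNReal.mul_lt_top ENNReal.ofReal_lt_top hM1, ?_⟩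
  intro T _ p _ hp V _ hM1V _ _
  set S : Set (ℝ × EuclideanSpace ℝ (Fin 3)) := {z | 0 < z.1 ∧ ENNReal.ofReal z.1 < T}
  have hpS : ∀ᵐ z ∂(volume.restrict S), pminus ≤ p z.2 ∧ p z.2 ≤ pplus :=
    ae_restrict_of_ae (Measure.quasiMeasurePreserving_snd.ae hp)
  calc ∫⁻ z in S, ENNReal.ofReal ‖((1 + ‖V z‖ ^ 2) ^ ((p z.2 - 2) / 2) - 1) • V z‖
      ≤ ∫⁻ z in S, ENNReal.ofReal K *
          ENNReal.ofReal ((1 + ‖V z‖ ^ 2) ^ ((p z.2 - 2) / 2) * ‖V z‖ ^ 2) := by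
        refine lintegral_mono_ae (hpS.mono fun z ⟨hlow, hup⟩ => ?_)
        have hα : 0 ≤ (p z.2 - 2) / 2 := by linarith
        have hK : max 1 ((p z.2 - 2) / 2) ≤ K := max_le_max_left 1 (by linarith)
        rw [← ENNReal.ofReal_mul (by positivity)]
        refine ENNReal.ofReal_le_ofReal ((norm_one_add_sq_rpow_sub_one_smul_le (V z) hα).trans ?_)
        exact mul_le_mul_of_nonneg_right hK (by positivity)
    _ = ENNReal.ofReal K * ∫⁻ z in S,
          ENNReal.ofReal ((1 + ‖V z‖ ^ 2) ^ ((p z.2 - 2) / 2) * ‖V z‖ ^ 2) :=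
        lintegral_const_mul' _ _ ENNReal.ofReal_ne_top
    _ ≤ ENNReal.ofReal K * M1 := by gcongr

/-- Case 1 (`p⁻ ≥ 3`) of the key lemma: if `G = ((1+|V|²)^((p(x)-2)/2) - 1) V` and the
energies `M₁ = ∬ (1+|V|²)^((p(x)-2)/2) |V|²`, `M₂ = ∬ |V|²`, `M₃ = ∬ |V|^{p⁻}` are finite,
then `∬_{(0,T)×ℝ³} |G| ≤ C` with `C` depending only on `p⁻, p⁺, M₁, M₂, M₃`.
Here `3 × 3` matrices are identified with `ℝ^{3×3}` carrying the (fixed) Euclidean norm,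
and `T ∈ (0,∞]`. -/
theorem perturbation_L1_bound_case1 (pminus pplus : ℝ) (hpm : 3 ≤ pminus)
    (hpmM : pminus ≤ pplus) (M1 M2 M3 : ℝ≥0∞) (hM1 : M1 < ⊤) (hM2 : M2 < ⊤) (hM3 : M3 < ⊤) :
    ∃ C : ℝ≥0∞, C < ⊤ ∧
      ∀ (T : ℝ≥0∞), 0 < T →
      ∀ (p : EuclideanSpace ℝ (Fin 3) → ℝ), Measurable p →
        (∀ᵐ x ∂(volume : Measure (EuclideanSpace ℝ (Fin 3))), pminus ≤ p x ∧ p x ≤ pplus) →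
      ∀ (V : ℝ × EuclideanSpace ℝ (Fin 3) → EuclideanSpace ℝ (Fin (3 * 3))), Measurable V →
        (∫⁻ z in {z : ℝ × EuclideanSpace ℝ (Fin 3) | 0 < z.1 ∧ ENNReal.ofReal z.1 < T},
            ENNReal.ofReal ((1 + ‖V z‖ ^ 2) ^ ((p z.2 - 2) / 2) * ‖V z‖ ^ 2)) ≤ M1 →
        (∫⁻ z in {z : ℝ × EuclideanSpace ℝ (Fin 3) | 0 < z.1 ∧ ENNReal.ofReal z.1 < T},
            ENNReal.ofReal (‖V z‖ ^ 2)) ≤ M2 →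
        (∫⁻ z in {z : ℝ × EuclideanSpace ℝ (Fin 3) | 0 < z.1 ∧ ENNReal.ofReal z.1 < T},
            ENNReal.ofReal (‖V z‖ ^ pminus)) ≤ M3 →
        (∫⁻ z in {z : ℝ × EuclideanSpace ℝ (Fin 3) | 0 < z.1 ∧ ENNReal.ofReal z.1 < T},
            ENNReal.ofReal ‖((1 + ‖V z‖ ^ 2) ^ ((p z.2 - 2) / 2) - 1) • V z‖) ≤ C :=
  perturbation_L1_bound_case1_general pminus pplus hpm M1 M2 M3 hM1
end

section
/- Let $v : [0,\infty) \times \mathbb{R}^3 \to \mathbb{C}$ be measurable with $v(t,\cdot) \in L^2(\mathbb{R}^3;\mathbb{C})$ for every $t$, set $E(t) = \int_{\mathbb{R}^3} |v(t,\xi)|^2\,d\xi$, and suppose $E$ is locally absolutely continuous, $\int_{\mathbb{R}^3}|\xi|^2 |v(t,\xi)|^2\,d\xi < \infty$ for a.e. $t$, and there is $C_0 > 0$ with $E'(t) + C_0 \int_{\mathbb{R}^3} |\xi|^2 |v(t,\xi)|^2\,d\xi \le 0$ for a.e. $t > 0$. Let $f : [0,\infty) \to \mathbb{R}$ be continuously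 differentiable with $f(0) = 1$, $f(t) > 0$ and $f'(t) > 0$ for all $t$. Then for every $t \ge 0$: $f(t)\,E(t) \le E(0) + \int_0^t f'(s) \int_{L(s)} |v(s,\xi)|^2\,d\xi\,ds$, where $L(s) = \{\xi \in \mathbb{R}^3 : C_0 |\xi|^2 f(s) \le f'(s)\}$. -/
/-!
With `E(s) = ∫ |v(s,ξ)|² dξ`, formally `(f E)' = f' E + f E' ≤ f' E - C₀ f ∫ |ξ|² |v|²`.
Split `f' E` into the part over `L(s)` and the part over its complement; on the complement
`f' < C₀ |ξ|² f`, so that part is absorbed by the dissipation term, leaving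
`(f E)' ≤ f' ∫_{L(s)} |v|²`. Since `E` is only absolutely continuous, the product rule is used
in integrated form (integration by parts for absolutely continuous functions), and the claim
follows by integrating over `[0, t]`.
-/

open MeasureTheory Set Function

theorem absolutelyContinuousOnInterval_of_hasDerivAt {f f' : ℝ → ℝ} {a b : ℝ}
    (hf : ∀ x ∈ uIcc a b, HasDerivAt f (f' x) x) (hf' : ContinuousOn f' (uIcc a b)) :
    AbsolutelyContinuousOnInterval f a b := by
  obtain ⟨C, hC⟩ := isCompact_uIcc.exists_bound_of_continuousOn hf'
  refine (Convex.lipschitzOnWith_of_nnnorm_hasDerivWithin_le (C := C.toNNReal) (convex_uIcc a b)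
    (fun x hx => (hf x hx).hasDerivWithinAt) fun x hx => ?_).absolutelyContinuousOnInterval
  rw [← NNReal.coe_le_coe, coe_nnnorm, Real.coe_toNNReal']
  exact (hC x hx).trans (le_max_left _ _)

theorem intervalIntegral.integral_deriv_mul_add_mul_eq_sub_of_eq_add_integral
    {f f' F g : ℝ → ℝ} {a b : ℝ}
    (hf : ∀ x ∈ uIcc a b, HasDerivAt f (f' x) x) (hf' : ContinuousOn f' (uIcc a b))
    (hg : IntervalIntegrable g volume a b)
    (hF : ∀ x ∈ uIcc a b, F x = F a + ∫ y in a..x, g y) :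
    ∫ x in a..b, f' x * F x + f x * g x = f b * F b - f a * F a := by
  have hQ : AbsolutelyContinuousOnInterval (fun x => F a + ∫ y in a..x, g y) a b :=
    contDiffOn_const.absolutelyContinuousOnInterval.fun_add
      (hg.absolutelyContinuousOnInterval_intervalIntegral left_mem_uIcc)
  have key := (absolutelyContinuousOnInterval_of_hasDerivAt hf hf').integral_deriv_mul_eq_sub hQ
  rw [intervalIntegral.integral_same, add_zero] at key
  rw [hF b right_mem_uIcc, ← key]
  refine intervalIntegral.integral_congr_ae ?_
  filter_upwards [hg.ae_hasDerivAt_integral] with x hx hxI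
  have hx' : x ∈ uIcc a b := uIoc_subset_uIcc hxI
  rw [(hf x hx').deriv, ((hx hx' a left_mem_uIcc).const_add (F a)).deriv, hF x hx']

theorem mul_integral_le_setIntegral_sublevel_add {α : Type*} [MeasurableSpace α] {μ : Measure α}
    {w ρ : α → ℝ} {a b : ℝ} (hρ : Measurable ρ) (hw : Integrable w μ)
    (hρw : Integrable (fun x => ρ x * w x) μ) (hw_nonneg : ∀ x, 0 ≤ w x) (hρ_nonneg : ∀ x, 0 ≤ ρ x)
    (ha : 0 ≤ a) :
    b * ∫ x, w x ∂μ ≤ b * ∫ x in {x | ρ x * a ≤ b}, w x ∂μ + a * ∫ x, ρ x * w x ∂μ := by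
  set S := {x | ρ x * a ≤ b}
  have hS : MeasurableSet S := measurableSet_le (hρ.mul_const a) measurable_const
  calc b * ∫ x, w x ∂μ = b * ∫ x in S, w x ∂μ + ∫ x in Sᶜ, b * w x ∂μ := by
        rw [← integral_add_compl hS hw, mul_add, integral_const_mul]
    _ ≤ b * ∫ x in S, w x ∂μ + ∫ x in Sᶜ, a * (ρ x * w x) ∂μ := by
        refine (add_le_add_iff_left _).mpr <| setIntegral_mono_on (hw.const_mul b).integrableOn
          (hρw.const_mul a).integrableOn hS.compl fun x hx => ?_
        have hlt : b < ρ x * a := lt_of_not_ge hx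
        nlinarith [hw_nonneg x]
    _ ≤ b * ∫ x in S, w x ∂μ + ∫ x, a * (ρ x * w x) ∂μ := by
        refine (add_le_add_iff_left _).mpr <| setIntegral_le_integral (hρw.const_mul a)
          (.of_forall fun x => mul_nonneg ha (mul_nonneg (hρ_nonneg x) (hw_nonneg x)))
    _ = b * ∫ x in S, w x ∂μ + a * ∫ x, ρ x * w x ∂μ := by rw [integral_const_mul]

theorem aestronglyMeasurable_setIntegral_sublevel {β α E : Type*} [MeasurableSpace β]
    [MeasurableSpace α] [NormedAddCommGroup E] [NormedSpace ℝ E] {ν : Measure β} {μ : Measure α}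
    [SFinite μ] {w : β → α → E} {ρ : α → ℝ} {p q : β → ℝ}
    (hw : StronglyMeasurable (uncurry w)) (hρ : Measurable ρ) (hp : AEMeasurable p ν)
    (hq : AEMeasurable q ν) :
    AEStronglyMeasurable (fun s => ∫ x in {x | ρ x * p s ≤ q s}, w s x ∂μ) ν := by
  set A : Set (β × α) := {z | ρ z.2 * hp.mk p z.1 ≤ hq.mk q z.1}
  have hA : MeasurableSet A := measurableSet_le
    ((hρ.comp measurable_snd).mul (hp.measurable_mk.comp measurable_fst))
    (hq.measurable_mk.comp measurable_fst)
  refine (hw.indicator hA).integral_prod_right' (ν := μ) |>.aestronglyMeasurable.congr ?_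
  filter_upwards [hp.ae_eq_mk, hq.ae_eq_mk] with s hps hqs
  rw [← integral_indicator (measurableSet_le (hρ.mul_const _) measurable_const)]
  congr 1
  ext x
  simp [A, indicator, hps, hqs]

theorem intervalIntegrable_mul_setIntegral_sublevel {α : Type*} [MeasurableSpace α]
    {μ : Measure α} [SFinite μ] {w : ℝ → α → ℝ} {ρ : α → ℝ} {f f' : ℝ → ℝ} {a b : ℝ}
    (hab : a ≤ b) (hw : Measurable (uncurry w)) (hw_nonneg : ∀ s x, 0 ≤ w s x)
    (hwi : ∀ s ∈ Icc a b, Integrable (w s) μ) (hρ : Measurable ρ)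
    (hf : ContinuousOn f (Icc a b)) (hf' : ContinuousOn f' (Icc a b))
    (hE : ContinuousOn (fun s => ∫ x, w s x ∂μ) (Icc a b)) :
    IntervalIntegrable (fun s => f' s * ∫ x in {x | ρ x * f s ≤ f' s}, w s x ∂μ) volume a b := by
  rw [intervalIntegrable_iff_integrableOn_Icc_of_le hab]
  refine Integrable.mono' ((hf'.norm.mul hE).integrableOn_Icc) ?_ ?_
  · exact (hf'.aemeasurable measurableSet_Icc).aestronglyMeasurable.mul
      (aestronglyMeasurable_setIntegral_sublevel hw.stronglyMeasurable hρ
        (hf.aemeasurable measurableSet_Icc) (hf'.aemeasurable measurableSet_Icc))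
  · filter_upwards [ae_restrict_mem measurableSet_Icc] with s hs
    rw [norm_mul, Real.norm_of_nonneg (setIntegral_nonneg_of_ae ?_)]
    · refine mul_le_mul_of_nonneg_left ?_ (norm_nonneg _)
      exact setIntegral_le_integral (hwi s hs) (Filter.Eventually.of_forall (hw_nonneg s))
    · exact Filter.Eventually.of_forall (hw_nonneg s)

theorem mul_integral_le_add_intervalIntegral_mul_setIntegral_sublevel {α : Type*}
    [MeasurableSpace α] {μ : Measure α} [SFinite μ] {w : ℝ → α → ℝ} {ρ : α → ℝ}
    {f f' E' : ℝ → ℝ} {a b : ℝ} (hab : a ≤ b) (hw : Measurable (uncurry w))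
    (hw_nonneg : ∀ s x, 0 ≤ w s x) (hwi : ∀ s ∈ Icc a b, Integrable (w s) μ) (hρ : Measurable ρ)
    (hρ_nonneg : ∀ x, 0 ≤ ρ x) (hE' : IntervalIntegrable E' volume a b)
    (hE : ∀ s ∈ Icc a b, ∫ x, w s x ∂μ = ∫ x, w a x ∂μ + ∫ r in a..s, E' r)
    (hρw : ∀ᵐ s, s ∈ Ioc a b → Integrable (fun x => ρ x * w s x) μ)
    (hdiss : ∀ᵐ s, s ∈ Ioc a b → E' s + ∫ x, ρ x * w s x ∂μ ≤ 0)
    (hf : ∀ s ∈ Icc a b, HasDerivAt f (f' s) s) (hf' : ContinuousOn f' (Icc a b))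
    (hf_nonneg : ∀ s ∈ Icc a b, 0 ≤ f s) :
    f b * ∫ x, w b x ∂μ ≤
      f a * ∫ x, w a x ∂μ + ∫ s in a..b, f' s * ∫ x in {x | ρ x * f s ≤ f' s}, w s x ∂μ := by
  have hEc : ContinuousOn (fun s => ∫ x, w s x ∂μ) (Icc a b) := by
    have := intervalIntegral.continuousOn_primitive_interval' hE' left_mem_uIcc
    rw [uIcc_of_le hab] at this
    exact (continuousOn_const.add this).congr hE
  have hfc : ContinuousOn f (Icc a b) := fun s hs => (hf s hs).continuousAt.continuousWithinAt
  have hparts := intervalIntegral.integral_deriv_mul_add_mul_eq_sub_of_eq_add_integral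
    (F := fun s => ∫ x, w s x ∂μ) (by rwa [uIcc_of_le hab]) (by rwa [uIcc_of_le hab]) hE'
    (by rwa [uIcc_of_le hab])
  have hlhs : IntervalIntegrable (fun s => f' s * (∫ x, w s x ∂μ) + f s * E' s) volume a b :=
    ((hf'.mul hEc).intervalIntegrable_of_Icc hab).add
      (hE'.continuousOn_mul (by rwa [uIcc_of_le hab]))
  have hrhs := intervalIntegrable_mul_setIntegral_sublevel hab hw hw_nonneg hwi hρ hfc hf' hEc
  have hpointwise : ∀ᵐ s, s ∈ Ioc a b → f' s * (∫ x, w s x ∂μ) + f s * E' s ≤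
      f' s * ∫ x in {x | ρ x * f s ≤ f' s}, w s x ∂μ := by
    filter_upwards [hρw, hdiss] with s hρws hdisss hs
    have hs' := Ioc_subset_Icc_self hs
    have hsplit := mul_integral_le_setIntegral_sublevel_add (b := f' s) hρ (hwi s hs')
      (hρws hs) (hw_nonneg s) hρ_nonneg (hf_nonneg s hs')
    have := mul_nonpos_of_nonneg_of_nonpos (hf_nonneg s hs') (hdisss hs)
    linarith
  have hmono : ∫ s in a..b, f' s * (∫ x, w s x ∂μ) + f s * E' s ≤
      ∫ s in a..b, f' s * ∫ x in {x | ρ x * f s ≤ f' s}, w s x ∂μ := by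
    rw [intervalIntegral.integral_of_le hab, intervalIntegral.integral_of_le hab]
    exact setIntegral_mono_ae_restrict hlhs.1 hrhs.1
      ((ae_restrict_iff' measurableSet_Ioc).mpr hpointwise)
  linarith

theorem fourier_splitting_master_general
    (v : ℝ → EuclideanSpace ℝ (Fin 3) → ℂ) (hv : Measurable (Function.uncurry v))
    (hL2 : ∀ t : ℝ, Integrable (fun ξ : EuclideanSpace ℝ (Fin 3) => ‖v t ξ‖ ^ 2))
    (C0 : ℝ) (hC0 : 0 < C0) (E' : ℝ → ℝ)
    (hE'int : ∀ t : ℝ, 0 ≤ t → IntervalIntegrable E' volume 0 t)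
    (hEAC : ∀ t : ℝ, 0 ≤ t →
      (∫ ξ, ‖v t ξ‖ ^ 2) = (∫ ξ, ‖v 0 ξ‖ ^ 2) + ∫ s in (0:ℝ)..t, E' s)
    (hDfin : ∀ᵐ t ∂(volume : Measure ℝ), 0 < t →
      Integrable (fun ξ : EuclideanSpace ℝ (Fin 3) => ‖ξ‖ ^ 2 * ‖v t ξ‖ ^ 2))
    (hdiss : ∀ᵐ t ∂(volume : Measure ℝ), 0 < t →
      E' t + C0 * ∫ ξ, ‖ξ‖ ^ 2 * ‖v t ξ‖ ^ 2 ≤ 0)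
    (f f' : ℝ → ℝ) (hf : ∀ t : ℝ, 0 ≤ t → HasDerivAt f (f' t) t)
    (hf'c : ContinuousOn f' (Set.Ici 0))
    (hf0 : f 0 = 1) (hfpos : ∀ t : ℝ, 0 ≤ t → 0 < f t) :
    ∀ t : ℝ, 0 ≤ t →
      f t * ∫ ξ, ‖v t ξ‖ ^ 2 ≤
        (∫ ξ, ‖v 0 ξ‖ ^ 2) +
        ∫ s in (0:ℝ)..t, f' s *
          ∫ ξ in {ξ : EuclideanSpace ℝ (Fin 3) | C0 * ‖ξ‖ ^ 2 * f s ≤ f' s}, ‖v s ξ‖ ^ 2 := by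
  intro t ht
  have hρw : ∀ᵐ s, s ∈ Ioc 0 t →
      Integrable (fun ξ : EuclideanSpace ℝ (Fin 3) => C0 * ‖ξ‖ ^ 2 * ‖v s ξ‖ ^ 2) := by
    filter_upwards [hDfin] with s hs hst
    simpa only [mul_assoc] using (hs hst.1).const_mul C0
  have hdiss' : ∀ᵐ s, s ∈ Ioc 0 t → E' s + ∫ ξ, C0 * ‖ξ‖ ^ 2 * ‖v s ξ‖ ^ 2 ≤ 0 := by
    filter_upwards [hdiss] with s hs hst
    simpa only [mul_assoc, integral_const_mul] using hs hst.1
  have key := mul_integral_le_add_intervalIntegral_mul_setIntegral_sublevel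
    (w := fun s ξ => ‖v s ξ‖ ^ 2) (ρ := fun ξ => C0 * ‖ξ‖ ^ 2) ht (hv.norm.pow_const 2)
    (fun _ _ => by positivity) (fun s _ => hL2 s) (by fun_prop) (fun _ => by positivity)
    (hE'int t ht) (fun s hs => hEAC s hs.1) hρw hdiss' (fun s hs => hf s hs.1)
    (hf'c.mono Icc_subset_Ici_self) (fun s hs => (hfpos s hs.1).le)
  rwa [hf0, one_mul] at key

/-- The master inequality of the Fourier splitting method. If `E(t) = ∫ |v(t,ξ)|² dξ` is
locally absolutely continuous (encoded by `E t = E 0 + ∫₀ᵗ E'` with `E'` locally integrable)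
and satisfies `E'(t) + C₀ ∫ |ξ|²|v(t,ξ)|² dξ ≤ 0` a.e., and `f` is `C¹` on `[0,∞)` with
`f(0)=1`, `f>0`, `f'>0`, then
`f(t) E(t) ≤ E(0) + ∫₀ᵗ f'(s) ∫_{L(s)} |v(s,ξ)|² dξ ds` with
`L(s) = {ξ : C₀ |ξ|² f(s) ≤ f'(s)}`. -/
theorem fourier_splitting_master
    (v : ℝ → EuclideanSpace ℝ (Fin 3) → ℂ) (hv : Measurable (Function.uncurry v))
    (hL2 : ∀ t : ℝ, Integrable (fun ξ : EuclideanSpace ℝ (Fin 3) => ‖v t ξ‖ ^ 2))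
    (C0 : ℝ) (hC0 : 0 < C0) (E' : ℝ → ℝ)
    (hE'int : ∀ t : ℝ, 0 ≤ t → IntervalIntegrable E' volume 0 t)
    (hEAC : ∀ t : ℝ, 0 ≤ t →
      (∫ ξ, ‖v t ξ‖ ^ 2) = (∫ ξ, ‖v 0 ξ‖ ^ 2) + ∫ s in (0:ℝ)..t, E' s)
    (hDfin : ∀ᵐ t ∂(volume : Measure ℝ), 0 < t →
      Integrable (fun ξ : EuclideanSpace ℝ (Fin 3) => ‖ξ‖ ^ 2 * ‖v t ξ‖ ^ 2))
    (hdiss : ∀ᵐ t ∂(volume : Measure ℝ), 0 < t →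
      E' t + C0 * ∫ ξ, ‖ξ‖ ^ 2 * ‖v t ξ‖ ^ 2 ≤ 0)
    (f f' : ℝ → ℝ) (hf : ∀ t : ℝ, 0 ≤ t → HasDerivAt f (f' t) t)
    (hf'c : ContinuousOn f' (Set.Ici 0))
    (hf0 : f 0 = 1) (hfpos : ∀ t : ℝ, 0 ≤ t → 0 < f t)
    (hf'pos : ∀ t : ℝ, 0 ≤ t → 0 < f' t) :
    ∀ t : ℝ, 0 ≤ t →
      f t * ∫ ξ, ‖v t ξ‖ ^ 2 ≤
        (∫ ξ, ‖v 0 ξ‖ ^ 2) +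
        ∫ s in (0:ℝ)..t, f' s *
          ∫ ξ in {ξ : EuclideanSpace ℝ (Fin 3) | C0 * ‖ξ‖ ^ 2 * f s ≤ f' s}, ‖v s ξ‖ ^ 2 :=
  fourier_splitting_master_general v hv hL2 C0 hC0 E' hE'int hEAC hDfin hdiss f f' hf hf'c hf0 hfpos
end

section
/- Let $v : [0,\infty) \times \mathbb{R}^3 \to \mathbb{C}$ be measurable with $v(t,\cdot) \in L^2(\mathbb{R}^3;\mathbb{C})$ for every $t$, set $E(t) = \int_{\mathbb{R}^3} |v(t,\xi)|^2\,d\xi$, and suppose $E$ is locally absolutely continuous, $\int_{\mathbb{R}^3}|\xi|^2 |v(t,\xi)|^2\,d\xi < \infty$ for a.e. $t$, and there is $C_0 > 0$ with $E'(t) + C_0 \int_{\mathbb{R}^3} |\xi|^2 |v(t,\xi)|^2\,d\xi \le 0$ for a.e. $t > 0$. Assume moreover there is $K > 0$ such that for every $t \ge 0$ and almost every $\xi$: $|v(t,\xi)| \le K\big(1 + |\xi|(1+t)\big)$. Then there is a constant $C$, depending only on $K$, $C_0$ and $E(0)$, such that $E(t) \le C (1+t)^{-1/2}$ for all $t \ge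 0$. -/
/-!
Fourier splitting. Put `ρ(s) = r (1 + s)^(-1/2)` with `C₀ r² = 3/2`. Away from the ball
`‖ξ‖ ≤ ρ(s)` the dissipation dominates `C₀ ρ² E`, so
`(1 + s) E' + (3/2) E ≤ (3/2) ∫_{‖ξ‖ ≤ ρ} |v|²`. On that ball the pointwise bound gives
`|v|² ≲ (1 + ρ (1 + s))² ≲ 1 + s`, and the ball has volume `≲ (1 + s)^(-3/2)`, so
`d/ds ((1 + s)^(3/2) E) ≲ 1`. Integrating (the product of `(1 + s)^(3/2)` with the absolutely
continuous `E` is absolutely continuous) gives `(1 + t)^(3/2) E(t) ≤ E(0) + C t`.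
-/

open MeasureTheory Set Metric

local notation "ω₃" => volume.real (ball (0 : EuclideanSpace ℝ (Fin 3)) 1)

theorem AbsolutelyContinuousOnInterval.sub_le_mul_of_ae_deriv_le {f : ℝ → ℝ} {a b M : ℝ}
    (hab : a ≤ b) (hf : AbsolutelyContinuousOnInterval f a b)
    (hM : ∀ᵐ x, x ∈ Ioo a b → deriv f x ≤ M) :
    f b - f a ≤ M * (b - a) := by
  rw [← hf.integral_deriv_eq_sub]
  calc ∫ x in a..b, deriv f x ≤ ∫ _ in a..b, M := by
        refine intervalIntegral.integral_mono_ae_restrict hab hf.intervalIntegrable_deriv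
          intervalIntegrable_const ?_
        rw [Filter.EventuallyLE, Measure.restrict_congr_set Ioo_ae_eq_Icc.symm,
          ae_restrict_iff' measurableSet_Ioo]
        exact hM
    _ = M * (b - a) := by simp [mul_comm]

theorem mul_primitive_sub_le {f g g' : ℝ → ℝ} {a b c M : ℝ} (hab : a ≤ b)
    (hf : IntervalIntegrable f volume a b) (hg : AbsolutelyContinuousOnInterval g a b)
    (hg' : ∀ x ∈ Ioo a b, HasDerivAt g (g' x) x)
    (hM : ∀ᵐ x, x ∈ Ioo a b → g' x * (c + ∫ y in a..x, f y) + g x * f x ≤ M) :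
    g b * (c + ∫ y in a..b, f y) - g a * c ≤ M * (b - a) := by
  have hF : AbsolutelyContinuousOnInterval (fun x => c + ∫ y in a..x, f y) a b :=
    contDiffOn_const.absolutelyContinuousOnInterval.add
      (hf.absolutelyContinuousOnInterval_intervalIntegral left_mem_uIcc)
  have key := (hg.mul hF).sub_le_mul_of_ae_deriv_le (M := M) hab ?_
  · simpa using key
  filter_upwards [hf.ae_hasDerivAt_integral, hM] with x hFx hMx hx
  have hxab : x ∈ uIcc a b := uIcc_of_le hab ▸ Ioo_subset_Icc_self hx
  rw [((hg' x hx).mul ((hFx hxab a left_mem_uIcc).const_add c)).deriv]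
  exact hMx hx

theorem sq_mul_integral_sub_setIntegral_closedBall_le {E : Type*} [NormedAddCommGroup E]
    [MeasurableSpace E] [OpensMeasurableSpace E] {μ : Measure E} {f : E → ℝ} (hf0 : 0 ≤ f)
    (hf : Integrable f μ) (hξf : Integrable (fun ξ => ‖ξ‖ ^ 2 * f ξ) μ) {ρ : ℝ} (hρ : 0 ≤ ρ) :
    ρ ^ 2 * ((∫ ξ, f ξ ∂μ) - ∫ ξ in closedBall 0 ρ, f ξ ∂μ) ≤ ∫ ξ, ‖ξ‖ ^ 2 * f ξ ∂μ := by
  have hS : MeasurableSet (closedBall (0 : E) ρ) := measurableSet_closedBall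
  calc ρ ^ 2 * ((∫ ξ, f ξ ∂μ) - ∫ ξ in closedBall 0 ρ, f ξ ∂μ)
      = ∫ ξ in (closedBall 0 ρ)ᶜ, ρ ^ 2 * f ξ ∂μ := by
        rw [integral_const_mul, ← integral_add_compl hS hf, add_sub_cancel_left]
    _ ≤ ∫ ξ in (closedBall 0 ρ)ᶜ, ‖ξ‖ ^ 2 * f ξ ∂μ := by
        refine setIntegral_mono_on (hf.const_mul _).integrableOn hξf.integrableOn hS.compl
          fun ξ hξ => mul_le_mul_of_nonneg_right ?_ (hf0 ξ)
        have : ρ < ‖ξ‖ := by simpa using hξ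
        gcongr
    _ ≤ ∫ ξ, ‖ξ‖ ^ 2 * f ξ ∂μ :=
        setIntegral_le_integral hξf (.of_forall fun ξ => mul_nonneg (by positivity) (hf0 ξ))

theorem setIntegral_closedBall_le_of_ae_le {E : Type*} [NormedAddCommGroup E] [NormedSpace ℝ E]
    [MeasurableSpace E] [BorelSpace E] [FiniteDimensional ℝ E] (μ : Measure E)
    [μ.IsAddHaarMeasure] {f : E → ℝ} {ρ M : ℝ} (hρ : 0 ≤ ρ)
    (hf : IntegrableOn f (closedBall 0 ρ) μ) (hfM : ∀ᵐ ξ ∂μ, ‖ξ‖ ≤ ρ → f ξ ≤ M) :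
    ∫ ξ in closedBall 0 ρ, f ξ ∂μ ≤ M * ρ ^ Module.finrank ℝ E * μ.real (ball 0 1) := by
  calc ∫ ξ in closedBall 0 ρ, f ξ ∂μ ≤ ∫ _ in closedBall 0 ρ, M ∂μ :=
        setIntegral_mono_on_ae hf (integrableOn_const measure_closedBall_lt_top.ne)
          measurableSet_closedBall (by simpa using hfM)
    _ = M * ρ ^ Module.finrank ℝ E * μ.real (ball 0 1) := by
        rw [setIntegral_const, Measure.addHaar_real_closedBall μ 0 hρ, smul_eq_mul]; ring

theorem mul_setIntegral_closedBall_div_le {F : Type*} [NormedAddCommGroup F]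
    {w : EuclideanSpace ℝ (Fin 3) → F} {K r σ : ℝ} (hw : Integrable (fun ξ => ‖w ξ‖ ^ 2))
    (hK : 0 ≤ K) (hr : 0 ≤ r) (hσ : 1 ≤ σ)
    (hptw : ∀ᵐ ξ, ‖w ξ‖ ≤ K * (1 + ‖ξ‖ * (σ * σ))) :
    σ * ∫ ξ in closedBall 0 (r / σ), ‖w ξ‖ ^ 2
      ≤ K ^ 2 * (1 + r) ^ 2 * r ^ 3 * ω₃ := by
  set ρ := r / σ
  have hρ : 0 ≤ ρ := by positivity
  have hrρ : r = ρ * σ := (div_mul_cancel₀ r (by positivity)).symm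
  have hball := setIntegral_closedBall_le_of_ae_le volume hρ hw.integrableOn
    (M := (K * (1 + ρ * (σ * σ))) ^ 2) <| by
      filter_upwards [hptw] with ξ hξ hξρ
      exact pow_le_pow_left₀ (norm_nonneg _) (hξ.trans (by gcongr)) 2
  rw [finrank_euclideanSpace_fin] at hball
  calc σ * ∫ ξ in closedBall 0 ρ, ‖w ξ‖ ^ 2
      ≤ σ * ((K * (1 + ρ * (σ * σ))) ^ 2 * ρ ^ 3 * ω₃) := by
        gcongr
    _ ≤ σ * ((K * (σ + ρ * (σ * σ))) ^ 2 * ρ ^ 3 * ω₃) := by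
        gcongr
    _ = K ^ 2 * (1 + r) ^ 2 * r ^ 3 * ω₃ := by
        rw [hrρ]; ring

theorem weighted_energy_deriv_le {F : Type*} [NormedAddCommGroup F]
    {w : EuclideanSpace ℝ (Fin 3) → F} {C0 K r s e' : ℝ} (hw : Integrable (fun ξ => ‖w ξ‖ ^ 2))
    (hξw : Integrable (fun ξ => ‖ξ‖ ^ 2 * ‖w ξ‖ ^ 2)) (hK : 0 ≤ K) (hr : 0 ≤ r)
    (hCr : C0 * r ^ 2 = 3 / 2) (hs : 0 ≤ s) (hptw : ∀ᵐ ξ, ‖w ξ‖ ≤ K * (1 + ‖ξ‖ * (1 + s)))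
    (hdiss : e' + C0 * ∫ ξ, ‖ξ‖ ^ 2 * ‖w ξ‖ ^ 2 ≤ 0) :
    3 / 2 * (1 + s) ^ (1 / 2 : ℝ) * (∫ ξ, ‖w ξ‖ ^ 2) + (1 + s) ^ (3 / 2 : ℝ) * e'
      ≤ 3 / 2 * (K ^ 2 * (1 + r) ^ 2 * r ^ 3 * ω₃) := by
  set σ := (1 + s) ^ (1 / 2 : ℝ)
  have hσσ : σ * σ = 1 + s := by rw [← Real.rpow_add (by linarith)]; norm_num
  have hσ : 1 ≤ σ := Real.one_le_rpow (by linarith) (by norm_num)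
  have hweight : (1 + s) ^ (3 / 2 : ℝ) = (1 + s) * σ := by
    rw [show (3 / 2 : ℝ) = 1 + 1 / 2 by norm_num, Real.rpow_add (by linarith), Real.rpow_one]
  have hlow := mul_setIntegral_closedBall_div_le hw hK hr hσ (by rwa [hσσ])
  have hsplit := sq_mul_integral_sub_setIntegral_closedBall_le (fun ξ => sq_nonneg ‖w ξ‖) hw hξw
    (div_nonneg hr (zero_le_one.trans hσ))
  have hC0 : 0 ≤ C0 := by nlinarith [sq_nonneg r]
  have hradius : C0 * (r / σ) ^ 2 * (1 + s) = 3 / 2 := by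
    rw [← hσσ, ← hCr]; field_simp
  have hdissρ : (1 + s) * e'
      ≤ -(3 / 2) * ((∫ ξ, ‖w ξ‖ ^ 2) - ∫ ξ in closedBall 0 (r / σ), ‖w ξ‖ ^ 2) := by
    rw [← hradius]
    nlinarith [mul_le_mul_of_nonneg_left hsplit (by positivity : 0 ≤ C0 * (1 + s))]
  rw [hweight]
  nlinarith [mul_le_mul_of_nonneg_left hdissρ (zero_le_one.trans hσ)]

theorem le_mul_rpow_neg_half_of_rpow_mul_le {x t a b C : ℝ} (ht : 0 ≤ t) (ha : a ≤ C)
    (hb : b ≤ C) (h : (1 + t) ^ (3 / 2 : ℝ) * x ≤ a + b * t) :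
    x ≤ C * (1 + t) ^ (-(1 / 2) : ℝ) := by
  have h1t : 0 < 1 + t := by linarith
  rw [← mul_le_mul_iff_of_pos_left (Real.rpow_pos_of_pos h1t (3 / 2)), mul_left_comm,
    ← Real.rpow_add h1t]
  norm_num
  nlinarith [mul_le_mul_of_nonneg_right hb ht]

theorem decay_first_step_general
    (v : ℝ → EuclideanSpace ℝ (Fin 3) → ℂ)
    (hL2 : ∀ t : ℝ, Integrable (fun ξ : EuclideanSpace ℝ (Fin 3) => ‖v t ξ‖ ^ 2))
    (C0 : ℝ) (hC0 : 0 < C0) (E' : ℝ → ℝ)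
    (hE'int : ∀ t : ℝ, 0 ≤ t → IntervalIntegrable E' volume 0 t)
    (hEAC : ∀ t : ℝ, 0 ≤ t →
      (∫ ξ, ‖v t ξ‖ ^ 2) = (∫ ξ, ‖v 0 ξ‖ ^ 2) + ∫ s in (0:ℝ)..t, E' s)
    (hDfin : ∀ᵐ t ∂(volume : Measure ℝ), 0 < t →
      Integrable (fun ξ : EuclideanSpace ℝ (Fin 3) => ‖ξ‖ ^ 2 * ‖v t ξ‖ ^ 2))
    (hdiss : ∀ᵐ t ∂(volume : Measure ℝ), 0 < t →
      E' t + C0 * ∫ ξ, ‖ξ‖ ^ 2 * ‖v t ξ‖ ^ 2 ≤ 0)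
    (K : ℝ) (hK : 0 < K)
    (hptw : ∀ t : ℝ, 0 ≤ t →
      ∀ᵐ ξ ∂(volume : Measure (EuclideanSpace ℝ (Fin 3))),
        ‖v t ξ‖ ≤ K * (1 + ‖ξ‖ * (1 + t))) :
    ∃ C : ℝ, 0 < C ∧ ∀ t : ℝ, 0 ≤ t →
      (∫ ξ, ‖v t ξ‖ ^ 2) ≤ C * (1 + t) ^ (-(1 / 2) : ℝ) := by
  obtain ⟨r, hr, hCr⟩ : ∃ r : ℝ, 0 ≤ r ∧ C0 * r ^ 2 = 3 / 2 :=
    ⟨√(3 / (2 * C0)), Real.sqrt_nonneg _, by rw [Real.sq_sqrt (by positivity)]; field_simp⟩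
  set A := 3 / 2 * (K ^ 2 * (1 + r) ^ 2 * r ^ 3 * ω₃)
  set E0 := ∫ ξ, ‖v 0 ξ‖ ^ 2
  have hA : 0 ≤ A := by positivity
  have hE0 : 0 ≤ E0 := integral_nonneg fun ξ => sq_nonneg _
  refine ⟨E0 + A + 1, by positivity, fun t ht => ?_⟩
  have hweight : AbsolutelyContinuousOnInterval (fun x : ℝ => (1 + x) ^ (3 / 2 : ℝ)) 0 t :=
    ((Real.contDiff_rpow_const_of_le (n := 1) (by norm_num)).comp
      (contDiff_const.add contDiff_id)).contDiffOn.absolutelyContinuousOnInterval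
  have hweight' (x : ℝ) :
      HasDerivAt (fun y : ℝ => (1 + y) ^ (3 / 2 : ℝ)) (3 / 2 * (1 + x) ^ (1 / 2 : ℝ)) x := by
    convert ((hasDerivAt_id' x).const_add 1).rpow_const (p := 3 / 2) (Or.inr (by norm_num))
      using 1
    norm_num
  have hgrowth := mul_primitive_sub_le (c := E0) (M := A) ht (hE'int t ht) hweight
      (fun x _ => hweight' x) <| by
    filter_upwards [hDfin, hdiss] with x hDx hdx hx
    rw [← hEAC x hx.1.le]
    exact weighted_energy_deriv_le (hL2 x) (hDx hx.1) hK.le hr hCr hx.1.le (hptw x hx.1.le)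
      (hdx hx.1)
  rw [← hEAC t ht] at hgrowth
  simp only [add_zero, Real.one_rpow, one_mul, sub_zero] at hgrowth
  exact le_mul_rpow_neg_half_of_rpow_mul_le (a := E0) (b := A) ht (by linarith) (by linarith)
    (by linarith)

/-- First bootstrap step of the Fourier splitting argument. If `E(t) = ∫ |v(t,ξ)|² dξ` is
locally absolutely continuous (encoded by `E t = E 0 + ∫₀ᵗ E'` with `E'` locally integrable),
satisfies the dissipation inequality `E'(t) + C₀ ∫ |ξ|²|v(t,ξ)|² dξ ≤ 0` a.e., and
`|v(t,ξ)| ≤ K (1 + |ξ|(1+t))` for all `t ≥ 0` and a.e. `ξ`, then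
`E(t) ≤ C (1+t)^{-1/2}` for a constant `C = C(K, C₀, E(0))`. -/
theorem decay_first_step
    (v : ℝ → EuclideanSpace ℝ (Fin 3) → ℂ) (hv : Measurable (Function.uncurry v))
    (hL2 : ∀ t : ℝ, Integrable (fun ξ : EuclideanSpace ℝ (Fin 3) => ‖v t ξ‖ ^ 2))
    (C0 : ℝ) (hC0 : 0 < C0) (E' : ℝ → ℝ)
    (hE'int : ∀ t : ℝ, 0 ≤ t → IntervalIntegrable E' volume 0 t)
    (hEAC : ∀ t : ℝ, 0 ≤ t →
      (∫ ξ, ‖v t ξ‖ ^ 2) = (∫ ξ, ‖v 0 ξ‖ ^ 2) + ∫ s in (0:ℝ)..t, E' s)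
    (hDfin : ∀ᵐ t ∂(volume : Measure ℝ), 0 < t →
      Integrable (fun ξ : EuclideanSpace ℝ (Fin 3) => ‖ξ‖ ^ 2 * ‖v t ξ‖ ^ 2))
    (hdiss : ∀ᵐ t ∂(volume : Measure ℝ), 0 < t →
      E' t + C0 * ∫ ξ, ‖ξ‖ ^ 2 * ‖v t ξ‖ ^ 2 ≤ 0)
    (K : ℝ) (hK : 0 < K)
    (hptw : ∀ t : ℝ, 0 ≤ t →
      ∀ᵐ ξ ∂(volume : Measure (EuclideanSpace ℝ (Fin 3))),
        ‖v t ξ‖ ≤ K * (1 + ‖ξ‖ * (1 + t))) :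
    ∃ C : ℝ, 0 < C ∧ ∀ t : ℝ, 0 ≤ t →
      (∫ ξ, ‖v t ξ‖ ^ 2) ≤ C * (1 + t) ^ (-(1 / 2) : ℝ) :=
  decay_first_step_general v hL2 C0 hC0 E' hE'int hEAC hDfin hdiss K hK hptw
end

section
/- Let $v : [0,\infty) \times \mathbb{R}^3 \to \mathbb{C}$ be measurable with $v(t,\cdot) \in L^2(\mathbb{R}^3;\mathbb{C})$ for every $t$, set $E(t) = \int_{\mathbb{R}^3} |v(t,\xi)|^2\,d\xi$, and suppose $E$ is locally absolutely continuous, $\int_{\mathbb{R}^3}|\xi|^2 |v(t,\xi)|^2\,d\xi < \infty$ for a.e. $t$, and there is $C_0 > 0$ with $E'(t) + C_0 \int_{\mathbb{R}^3} |\xi|^2 |v(t,\xi)|^2\,d\xi \le 0$ for a.e. $t > 0$. Assume moreover there is $K > 0$ such that for every $t \ge 0$ and almost every $\xi$: $|v(t,\xi)| \le K\big(1 + |\xi|(1+t)^{1/2}\big)$. Then there is a constant $C$, depending only on $K$, $C_0$ and $E(0)$, such that $E(t) \le C (1+t)^{-3/2}$ for all $t \ge 0$. -/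
/-!
Fourier splitting. At time `s` split frequency space at the radius `ρ = a (1 + s)^(-1/2)`:
inside the ball the pointwise bound gives `|v| ≤ K (1 + a)`, outside it `|ξ|² ≥ ρ²`, so
`E ≤ K² (1 + a)² |B_ρ| + ρ⁻² ∫ |ξ|² |v|²` and the dissipation inequality turns into
`E' ≤ -16/(1+s) E + B (1+s)^(-5/2)`. Integrating it over `[t, 2t+1]`, where `E` is
nonincreasing, gives `9 E(2t+1) ≤ E(t) + B (1+t)^(-3/2)`; since `9 > 2^(5/2)`, iterating along
the dyadic times `t = 2ⁿ - 1` yields `E(t) ≲ (1+t)^(-3/2)`.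
-/

open MeasureTheory Metric Set Module

theorem le_mul_rpow_of_doubling {E : ℝ → ℝ} {κ B γ : ℝ} (hγ : 0 ≤ γ) (hB : 0 ≤ B)
    (hκ : 2 * 2 ^ γ ≤ κ) (hEnn : ∀ t, 0 ≤ t → 0 ≤ E t) (hanti : AntitoneOn E (Ici 0))
    (hdbl : ∀ t, 0 ≤ t → κ * E (2 * t + 1) ≤ E t + B * (1 + t) ^ (-γ)) :
    ∃ C, 0 < C ∧ ∀ t, 0 ≤ t → E t ≤ C * (1 + t) ^ (-γ) := by
  set C := E 0 + B + 1 with hC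
  have hE₀ := hEnn 0 le_rfl
  have hC₀ : 0 < C := by linarith
  have hCB : C + B ≤ 2 * C := by linarith
  have hdyadic : ∀ n : ℕ, E (2 ^ n - 1) ≤ C * ((2 : ℝ) ^ n) ^ (-γ) := by
    intro n
    induction n with
    | zero =>
      simp only [pow_zero, sub_self, Real.one_rpow, mul_one]
      linarith
    | succ n ih =>
      have h1 : (1 : ℝ) ≤ 2 ^ n := one_le_pow₀ one_le_two
      have hd := hdbl (2 ^ n - 1) (by linarith)
      rw [show 2 * ((2 : ℝ) ^ n - 1) + 1 = 2 ^ (n + 1) - 1 by ring, add_sub_cancel] at hd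
      have h1' : (1 : ℝ) ≤ 2 ^ (n + 1) := one_le_pow₀ one_le_two
      have hE := hEnn (2 ^ (n + 1) - 1) (by linarith)
      have hx : 0 ≤ ((2 : ℝ) ^ n) ^ (-γ) := by positivity
      have hsplit : ((2 : ℝ) ^ (n + 1)) ^ (-γ) = ((2 : ℝ) ^ n) ^ (-γ) / 2 ^ γ := by
        rw [pow_succ, Real.mul_rpow (by positivity) zero_le_two, Real.rpow_neg (x := 2) zero_le_two,
          div_eq_mul_inv]
      rw [hsplit, mul_div_assoc', le_div_iff₀ (by positivity)]
      nlinarith [mul_le_mul_of_nonneg_right hκ hE, mul_le_mul_of_nonneg_right hCB hx]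
  refine ⟨2 ^ γ * C, by positivity, fun t ht => ?_⟩
  obtain ⟨n, hlow, hhigh⟩ := exists_nat_pow_near (by linarith : (1 : ℝ) ≤ 1 + t) one_lt_two
  have h1 : (1 : ℝ) ≤ 2 ^ n := one_le_pow₀ one_le_two
  have hcomp : ((2 : ℝ) ^ n) ^ (-γ) ≤ 2 ^ γ * (1 + t) ^ (-γ) := by
    calc ((2 : ℝ) ^ n) ^ (-γ) ≤ ((1 + t) / 2) ^ (-γ) :=
          Real.rpow_le_rpow_of_nonpos (by positivity) (by rw [pow_succ] at hhigh; linarith)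
            (by linarith)
      _ = 2 ^ γ * (1 + t) ^ (-γ) := by
          rw [Real.div_rpow (by linarith) zero_le_two, Real.rpow_neg (x := 2) zero_le_two,
            div_inv_eq_mul, mul_comm]
  calc E t ≤ E (2 ^ n - 1) := hanti (mem_Ici.2 (by linarith)) ht (by linarith)
    _ ≤ C * ((2 : ℝ) ^ n) ^ (-γ) := hdyadic n
    _ ≤ C * (2 ^ γ * (1 + t) ^ (-γ)) := by gcongr
    _ = 2 ^ γ * C * (1 + t) ^ (-γ) := by ring

section IntegralForm

variable {E E' : ℝ → ℝ}

theorem le_add_mul_of_ae_le (hint : ∀ t, 0 ≤ t → IntervalIntegrable E' volume 0 t)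
    (hAC : ∀ t, 0 ≤ t → E t = E 0 + ∫ s in (0 : ℝ)..t, E' s)
    {t₁ t₂ M : ℝ} (h₀ : 0 ≤ t₁) (h₁₂ : t₁ ≤ t₂) (hM : ∀ᵐ s, s ∈ Ioc t₁ t₂ → E' s ≤ M) :
    E t₂ ≤ E t₁ + M * (t₂ - t₁) := by
  have h₂ : 0 ≤ t₂ := h₀.trans h₁₂
  have hsub : E t₂ - E t₁ = ∫ s in t₁..t₂, E' s := by
    rw [hAC t₂ h₂, hAC t₁ h₀, add_sub_add_left_eq_sub,
      intervalIntegral.integral_interval_sub_left (hint t₂ h₂) (hint t₁ h₀)]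
  have hint₁₂ : IntervalIntegrable E' volume t₁ t₂ :=
    (hint t₁ h₀).symm.trans (hint t₂ h₂)
  have hle : ∫ s in t₁..t₂, E' s ≤ ∫ _ in t₁..t₂, M := by
    rw [intervalIntegral.integral_of_le h₁₂, intervalIntegral.integral_of_le h₁₂]
    exact setIntegral_mono_ae_restrict hint₁₂.1 intervalIntegrable_const.1
      ((ae_restrict_iff' measurableSet_Ioc).2 hM)
  rw [intervalIntegral.integral_const, smul_eq_mul] at hle
  linarith

theorem antitoneOn_of_ae_nonpos (hint : ∀ t, 0 ≤ t → IntervalIntegrable E' volume 0 t)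
    (hAC : ∀ t, 0 ≤ t → E t = E 0 + ∫ s in (0 : ℝ)..t, E' s)
    (hneg : ∀ᵐ s, 0 < s → E' s ≤ 0) : AntitoneOn E (Ici 0) := by
  intro t₁ h₀ t₂ _ h₁₂
  have hM : ∀ᵐ s, s ∈ Ioc t₁ t₂ → E' s ≤ 0 := by
    filter_upwards [hneg] with s hs hmem
    exact hs (lt_of_le_of_lt h₀ hmem.1)
  simpa using le_add_mul_of_ae_le hint hAC h₀ h₁₂ hM

-- On `[t, 2t+1]`, an interval of length `1 + t`, the decay rate `c/(1+s)` is at least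
-- `c/(2(1+t))`, while `E` does not exceed its value at the left end.
theorem mul_le_add_of_ae_deriv_le (hint : ∀ t, 0 ≤ t → IntervalIntegrable E' volume 0 t)
    (hAC : ∀ t, 0 ≤ t → E t = E 0 + ∫ s in (0 : ℝ)..t, E' s)
    (hEnn : ∀ t, 0 ≤ t → 0 ≤ E t) (hanti : AntitoneOn E (Ici 0)) {c B γ : ℝ} (hc : 0 ≤ c)
    (hB : 0 ≤ B) (hγ : 0 ≤ γ + 1)
    (hkey : ∀ᵐ s, 0 < s → E' s ≤ -(c / (1 + s)) * E s + B * (1 + s) ^ (-(γ + 1)))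
    {t : ℝ} (ht : 0 ≤ t) :
    (1 + c / 2) * E (2 * t + 1) ≤ E t + B * (1 + t) ^ (-γ) := by
  have ht₁ : 0 < 1 + t := by linarith
  have hM : ∀ᵐ s, s ∈ Ioc t (2 * t + 1) →
      E' s ≤ -(c / (2 * (1 + t))) * E (2 * t + 1) + B * (1 + t) ^ (-(γ + 1)) := by
    filter_upwards [hkey] with s hs hmem
    have hs₀ : 0 < s := ht.trans_lt hmem.1
    have hdecay : c / (2 * (1 + t)) * E (2 * t + 1) ≤ c / (1 + s) * E s :=
      mul_le_mul (div_le_div_of_nonneg_left hc (by linarith) (by linarith [hmem.2]))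
        (hanti hs₀.le (mem_Ici.2 (by linarith)) hmem.2) (hEnn _ (by linarith)) (by positivity)
    have hsource : (1 + s) ^ (-(γ + 1)) ≤ (1 + t) ^ (-(γ + 1)) :=
      Real.rpow_le_rpow_of_nonpos ht₁ (by linarith [hmem.1]) (by linarith)
    nlinarith [hs hs₀]
  have hstep := le_add_mul_of_ae_le hint hAC ht (by linarith) hM
  have hpow : (1 + t) ^ (-(γ + 1)) * (1 + t) = (1 + t) ^ (-γ) := by
    rw [← Real.rpow_add_one ht₁.ne']; ring_nf
  have hlen : (2 * t + 1) - t = 1 + t := by ring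
  rw [hlen, add_mul, mul_assoc B, hpow] at hstep
  have hc' : -(c / (2 * (1 + t))) * E (2 * t + 1) * (1 + t) = -(c / 2) * E (2 * t + 1) := by
    field_simp
  linarith

theorem le_mul_rpow_of_ae_deriv_le (hint : ∀ t, 0 ≤ t → IntervalIntegrable E' volume 0 t)
    (hAC : ∀ t, 0 ≤ t → E t = E 0 + ∫ s in (0 : ℝ)..t, E' s)
    (hEnn : ∀ t, 0 ≤ t → 0 ≤ E t) (hneg : ∀ᵐ s, 0 < s → E' s ≤ 0) {c B γ : ℝ} (hγ : 0 ≤ γ)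
    (hB : 0 ≤ B) (hc : 2 * 2 ^ γ ≤ 1 + c / 2)
    (hkey : ∀ᵐ s, 0 < s → E' s ≤ -(c / (1 + s)) * E s + B * (1 + s) ^ (-(γ + 1))) :
    ∃ C, 0 < C ∧ ∀ t, 0 ≤ t → E t ≤ C * (1 + t) ^ (-γ) := by
  have hanti := antitoneOn_of_ae_nonpos hint hAC hneg
  have hc₀ : 0 ≤ c := by linarith [Real.one_le_rpow one_le_two hγ]
  exact le_mul_rpow_of_doubling hγ hB hc hEnn hanti fun t ht =>
    mul_le_add_of_ae_deriv_le hint hAC hEnn hanti hc₀ hB (by linarith) hkey ht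

end IntegralForm

section FourierSplitting

variable {V F : Type*} [NormedAddCommGroup V] [MeasurableSpace V] [NormedAddCommGroup F]

theorem integral_norm_sq_le_of_splitting [ProperSpace V] [OpensMeasurableSpace V]
    (μ : Measure V) [IsFiniteMeasureOnCompacts μ] {f : V → F} {ρ M : ℝ} (hρ : 0 < ρ)
    (hD : Integrable (fun ξ => ‖ξ‖ ^ 2 * ‖f ξ‖ ^ 2) μ)
    (hM : ∀ᵐ ξ ∂μ, ‖ξ‖ ≤ ρ → ‖f ξ‖ ≤ M) :
    ∫ ξ, ‖f ξ‖ ^ 2 ∂μ ≤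
      μ.real (closedBall 0 ρ) * M ^ 2 + (∫ ξ, ‖ξ‖ ^ 2 * ‖f ξ‖ ^ 2 ∂μ) / ρ ^ 2 := by
  have hball : Integrable ((closedBall (0 : V) ρ).indicator fun _ => M ^ 2) μ :=
    (integrable_indicator_iff measurableSet_closedBall).2 <|
      integrableOn_const measure_closedBall_lt_top.ne
  have hpt : ∀ᵐ ξ ∂μ, ‖f ξ‖ ^ 2 ≤
      (closedBall (0 : V) ρ).indicator (fun _ => M ^ 2) ξ + ‖ξ‖ ^ 2 * ‖f ξ‖ ^ 2 / ρ ^ 2 := by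
    filter_upwards [hM] with ξ hξ
    by_cases hmem : ‖ξ‖ ≤ ρ
    · rw [indicator_of_mem (mem_closedBall_zero_iff.2 hmem)]
      have := pow_le_pow_left₀ (norm_nonneg _) (hξ hmem) 2
      have : 0 ≤ ‖ξ‖ ^ 2 * ‖f ξ‖ ^ 2 / ρ ^ 2 := by positivity
      linarith
    · rw [indicator_of_notMem (mt mem_closedBall_zero_iff.1 hmem), zero_add,
        le_div_iff₀ (by positivity)]
      have : ρ ^ 2 ≤ ‖ξ‖ ^ 2 := pow_le_pow_left₀ hρ.le (not_le.1 hmem).le 2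
      nlinarith [sq_nonneg ‖f ξ‖]
  calc ∫ ξ, ‖f ξ‖ ^ 2 ∂μ
      ≤ ∫ ξ, (closedBall (0 : V) ρ).indicator (fun _ => M ^ 2) ξ +
          ‖ξ‖ ^ 2 * ‖f ξ‖ ^ 2 / ρ ^ 2 ∂μ :=
        integral_mono_of_nonneg (.of_forall fun _ => by positivity)
          (hball.add (hD.div_const _)) hpt
    _ = μ.real (closedBall 0 ρ) * M ^ 2 + (∫ ξ, ‖ξ‖ ^ 2 * ‖f ξ‖ ^ 2 ∂μ) / ρ ^ 2 := by
        rw [integral_add hball (hD.div_const _),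
          integral_indicator_const _ measurableSet_closedBall, integral_div, smul_eq_mul]

theorem deriv_le_of_dissipation [NormedSpace ℝ V] [FiniteDimensional ℝ V] [BorelSpace V]
    (μ : Measure V) [μ.IsAddHaarMeasure] {f : V → F} {σ a C₀ K e' : ℝ} (hσ : 0 < σ) (ha : 0 < a)
    (hC₀ : 0 ≤ C₀) (hK : 0 ≤ K) (hD : Integrable (fun ξ => ‖ξ‖ ^ 2 * ‖f ξ‖ ^ 2) μ)
    (hdiss : e' + C₀ * ∫ ξ, ‖ξ‖ ^ 2 * ‖f ξ‖ ^ 2 ∂μ ≤ 0)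
    (hptw : ∀ᵐ ξ ∂μ, ‖f ξ‖ ≤ K * (1 + ‖ξ‖ * σ ^ (1 / 2 : ℝ))) :
    e' ≤ -(C₀ * a ^ 2 / σ) * ∫ ξ, ‖f ξ‖ ^ 2 ∂μ +
      C₀ * (K * (1 + a)) ^ 2 * a ^ (finrank ℝ V + 2) * μ.real (ball 0 1) *
        σ ^ (-((finrank ℝ V : ℝ) / 2 + 1)) := by
  set d := finrank ℝ V
  set r := √σ with hr
  have hr₀ : 0 < r := Real.sqrt_pos.2 hσ
  -- the radius at which the pointwise bound `K (1 + ‖ξ‖ √σ)` becomes the constant `K (1 + a)`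
  set ρ := a / r with hρ
  have hρ₀ : 0 < ρ := div_pos ha hr₀
  have hM : ∀ᵐ ξ ∂μ, ‖ξ‖ ≤ ρ → ‖f ξ‖ ≤ K * (1 + a) := by
    filter_upwards [hptw] with ξ hξ hξρ
    rw [← Real.sqrt_eq_rpow] at hξ
    have : ‖ξ‖ * r ≤ a := (le_div_iff₀ hr₀).1 hξρ
    nlinarith
  have hsplit := integral_norm_sq_le_of_splitting μ hρ₀ hD hM
  rw [Measure.addHaar_real_closedBall μ _ hρ₀.le] at hsplit
  have hρ₂ : ρ ^ 2 = a ^ 2 / σ := by rw [hρ, div_pow, hr, Real.sq_sqrt hσ.le]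
  have hrd : r ^ (d + 2) = σ ^ ((d : ℝ) / 2 + 1) := by
    rw [hr, Real.sqrt_eq_rpow, ← Real.rpow_natCast, ← Real.rpow_mul hσ.le]
    push_cast
    ring_nf
  have hρd : ρ ^ (d + 2) = a ^ (d + 2) * σ ^ (-((d : ℝ) / 2 + 1)) := by
    rw [hρ, div_pow, hrd, Real.rpow_neg hσ.le, div_eq_mul_inv]
  have hρ₂₀ : 0 < ρ ^ 2 := by positivity
  have hD' : (∫ ξ, ‖f ξ‖ ^ 2 ∂μ - ρ ^ d * μ.real (ball 0 1) * (K * (1 + a)) ^ 2) * ρ ^ 2 ≤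
      ∫ ξ, ‖ξ‖ ^ 2 * ‖f ξ‖ ^ 2 ∂μ := (le_div_iff₀ hρ₂₀).1 (by linarith)
  calc e' ≤ -(C₀ * ∫ ξ, ‖ξ‖ ^ 2 * ‖f ξ‖ ^ 2 ∂μ) := by linarith
    _ ≤ -(C₀ * ρ ^ 2) * ∫ ξ, ‖f ξ‖ ^ 2 ∂μ +
        C₀ * (K * (1 + a)) ^ 2 * ρ ^ (d + 2) * μ.real (ball 0 1) := by
      rw [pow_add]
      linear_combination C₀ * hD'
    _ = _ := by rw [hρ₂, hρd]; ring

end FourierSplitting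

theorem decay_second_step_general
    (v : ℝ → EuclideanSpace ℝ (Fin 3) → ℂ)
    (C0 : ℝ) (hC0 : 0 < C0) (E' : ℝ → ℝ)
    (hE'int : ∀ t : ℝ, 0 ≤ t → IntervalIntegrable E' volume 0 t)
    (hEAC : ∀ t : ℝ, 0 ≤ t →
      (∫ ξ, ‖v t ξ‖ ^ 2) = (∫ ξ, ‖v 0 ξ‖ ^ 2) + ∫ s in (0:ℝ)..t, E' s)
    (hDfin : ∀ᵐ t ∂(volume : Measure ℝ), 0 < t →
      Integrable (fun ξ : EuclideanSpace ℝ (Fin 3) => ‖ξ‖ ^ 2 * ‖v t ξ‖ ^ 2))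
    (hdiss : ∀ᵐ t ∂(volume : Measure ℝ), 0 < t →
      E' t + C0 * ∫ ξ, ‖ξ‖ ^ 2 * ‖v t ξ‖ ^ 2 ≤ 0)
    (K : ℝ) (hK : 0 < K)
    (hptw : ∀ t : ℝ, 0 ≤ t →
      ∀ᵐ ξ ∂(volume : Measure (EuclideanSpace ℝ (Fin 3))),
        ‖v t ξ‖ ≤ K * (1 + ‖ξ‖ * (1 + t) ^ ((1 : ℝ) / 2))) :
    ∃ C : ℝ, 0 < C ∧ ∀ t : ℝ, 0 ≤ t →
      (∫ ξ, ‖v t ξ‖ ^ 2) ≤ C * (1 + t) ^ (-(3 / 2) : ℝ) := by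
  set a := √(16 / C0)
  have ha : 0 < a := Real.sqrt_pos.2 (by positivity)
  have hCa : C0 * a ^ 2 = 16 := by
    rw [Real.sq_sqrt (by positivity)]; field_simp
  have hkey : ∀ᵐ s, 0 < s → E' s ≤ -(16 / (1 + s)) * (∫ ξ, ‖v s ξ‖ ^ 2) +
      C0 * (K * (1 + a)) ^ 2 * a ^ (3 + 2) * volume.real (ball (0 : EuclideanSpace ℝ (Fin 3)) 1) *
        (1 + s) ^ (-((3 : ℝ) / 2 + 1)) := by
    filter_upwards [hDfin, hdiss] with s hD hd hs
    have := deriv_le_of_dissipation volume (by linarith) ha hC0.le hK.le (hD hs) (hd hs)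
      (hptw s hs.le)
    simpa only [hCa, finrank_euclideanSpace_fin, Nat.cast_ofNat] using this
  have hneg : ∀ᵐ s, 0 < s → E' s ≤ 0 := by
    filter_upwards [hdiss] with s hd hs
    have hD₀ : 0 ≤ ∫ ξ, ‖ξ‖ ^ 2 * ‖v s ξ‖ ^ 2 := integral_nonneg fun ξ => by positivity
    linarith [hd hs, mul_nonneg hC0.le hD₀]
  -- the rate `16` makes the doubling gain `1 + 16/2 = 9` exceed `2 · 2^(3/2)`
  have hc : 2 * (2 : ℝ) ^ ((3 : ℝ) / 2) ≤ 1 + 16 / 2 := by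
    have h₄ : (2 : ℝ) ^ ((3 : ℝ) / 2) ≤ 2 ^ (2 : ℝ) :=
      Real.rpow_le_rpow_of_exponent_le one_le_two (by norm_num)
    rw [Real.rpow_two] at h₄
    linarith [show (2 : ℝ) ^ 2 = 4 by norm_num]
  exact le_mul_rpow_of_ae_deriv_le hE'int hEAC (fun t _ => integral_nonneg fun _ => by positivity)
    hneg (by norm_num) (by positivity) hc hkey

/-- Second bootstrap step of the Fourier splitting argument. If `E(t) = ∫ |v(t,ξ)|² dξ` is
locally absolutely continuous (encoded by `E t = E 0 + ∫₀ᵗ E'` with `E'` locally integrable),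
satisfies the dissipation inequality `E'(t) + C₀ ∫ |ξ|²|v(t,ξ)|² dξ ≤ 0` a.e., and
`|v(t,ξ)| ≤ K (1 + |ξ|(1+t)^{1/2})` for all `t ≥ 0` and a.e. `ξ`, then
`E(t) ≤ C (1+t)^{-3/2}` for a constant `C = C(K, C₀, E(0))`. -/
theorem decay_second_step
    (v : ℝ → EuclideanSpace ℝ (Fin 3) → ℂ) (hv : Measurable (Function.uncurry v))
    (hL2 : ∀ t : ℝ, Integrable (fun ξ : EuclideanSpace ℝ (Fin 3) => ‖v t ξ‖ ^ 2))
    (C0 : ℝ) (hC0 : 0 < C0) (E' : ℝ → ℝ)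
    (hE'int : ∀ t : ℝ, 0 ≤ t → IntervalIntegrable E' volume 0 t)
    (hEAC : ∀ t : ℝ, 0 ≤ t →
      (∫ ξ, ‖v t ξ‖ ^ 2) = (∫ ξ, ‖v 0 ξ‖ ^ 2) + ∫ s in (0:ℝ)..t, E' s)
    (hDfin : ∀ᵐ t ∂(volume : Measure ℝ), 0 < t →
      Integrable (fun ξ : EuclideanSpace ℝ (Fin 3) => ‖ξ‖ ^ 2 * ‖v t ξ‖ ^ 2))
    (hdiss : ∀ᵐ t ∂(volume : Measure ℝ), 0 < t →
      E' t + C0 * ∫ ξ, ‖ξ‖ ^ 2 * ‖v t ξ‖ ^ 2 ≤ 0)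
    (K : ℝ) (hK : 0 < K)
    (hptw : ∀ t : ℝ, 0 ≤ t →
      ∀ᵐ ξ ∂(volume : Measure (EuclideanSpace ℝ (Fin 3))),
        ‖v t ξ‖ ≤ K * (1 + ‖ξ‖ * (1 + t) ^ ((1 : ℝ) / 2))) :
    ∃ C : ℝ, 0 < C ∧ ∀ t : ℝ, 0 ≤ t →
      (∫ ξ, ‖v t ξ‖ ^ 2) ≤ C * (1 + t) ^ (-(3 / 2) : ℝ) :=
  decay_second_step_general v C0 hC0 E' hE'int hEAC hDfin hdiss K hK hptw
end

section
/- Let $v : [0,\infty) \times \mathbb{R}^3 \to \mathbb{C}$ be measurable with $v(t,\cdot) \in L^2(\mathbb{R}^3;\mathbb{C})$ for every $t$, set $E(t) = \int_{\mathbb{R}^3} |v(t,\xi)|^2\,d\xi$, and suppose $E$ is locally absolutely continuous, $\int_{\mathbb{R}^3}|\xi|^2 |v(t,\xi)|^2\,d\xi < \infty$ for a.e. $t$, and there is $C_0 > 0$ with $E'(t) + C_0 \int_{\mathbb{R}^3} |\xi|^2 |v(t,\xi)|^2\,d\xi \le 0$ for a.e. $t > 0$. Assume moreover there is $K > 0$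 such that for every $t \ge 0$ and almost every $\xi$: $|v(t,\xi)| \le K\Big(1 + |\xi|\big(1 + \int_0^t E(s)\,ds\big)\Big)$. Then there is a constant $C$, depending only on $K$, $C_0$ and $E(0)$, such that $E(t) \le C (1+t)^{-3/2}$ for all $t \ge 0$. -/
/-!
Fourier splitting (Schonbek). Split frequency space at radius `ρ`: by the pointwise bound the
ball `|ξ| < ρ` carries at most `c ρ³ (1 + ρ (1 + ∫₀ᵗ E))²` of the energy, and its complement at
most `D / ρ²`, so the energy inequality gives `E' ≤ κ ρ² (c ρ³ (1 + ρ (1 + ∫₀ᵗ E))² - E)`.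
Integrating over `[t, 2t]` with `κ ρ² t = 6` yields `E (2t) ≤ E t / 7 + (low-frequency term)`,
and iterating over dyadic times turns this into decay `(1 + t)^(-β)` as long as `2^β < 7`.
The crude bound `∫₀ᵗ E ≤ t E 0` gives `β = 1/2`; then `∫₀ᵗ E = O(√t)`, and the same argument
gives `β = 3/2`.
-/

open MeasureTheory Real Set Metric

theorem le_mul_rpow_neg_of_le_dyadic {f : ℝ → ℝ} {θ A β M : ℝ} (hθ : 0 ≤ θ)
    (hrec : ∀ t, 1 ≤ t → f (2 * t) ≤ θ * f t + A * t ^ (-β))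
    (hbase : ∀ t ∈ Icc (1 : ℝ) 2, f t ≤ M * t ^ (-β)) (hM : (θ * M + A) * 2 ^ β ≤ M) :
    ∀ t, 1 ≤ t → f t ≤ M * t ^ (-β) := by
  have hdyadic : ∀ n : ℕ, ∀ t ∈ Icc (1 : ℝ) (2 ^ (n + 1)), f t ≤ M * t ^ (-β) := by
    intro n
    induction n with
    | zero => simpa using hbase
    | succ n ih =>
      rintro t ⟨ht1, ht⟩
      rcases le_or_gt t (2 ^ (n + 1)) with hle | hlt
      · exact ih t ⟨ht1, hle⟩
      have h2 : (2 : ℝ) ≤ 2 ^ (n + 1) := le_self_pow₀ one_le_two n.succ_ne_zero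
      have hhalf : t / 2 ∈ Icc (1 : ℝ) (2 ^ (n + 1)) :=
        ⟨by linarith, by rw [pow_succ] at ht; linarith⟩
      have hscale : (t / 2) ^ (-β) = 2 ^ β * t ^ (-β) := by
        rw [div_rpow (by linarith) zero_le_two, rpow_neg zero_le_two, div_eq_mul_inv, inv_inv,
          mul_comm]
      calc f t = f (2 * (t / 2)) := by ring_nf
        _ ≤ θ * f (t / 2) + A * (t / 2) ^ (-β) := hrec _ hhalf.1
        _ ≤ θ * (M * (t / 2) ^ (-β)) + A * (t / 2) ^ (-β) := by gcongr; exact ih _ hhalf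
        _ = (θ * M + A) * 2 ^ β * t ^ (-β) := by rw [hscale]; ring
        _ ≤ M * t ^ (-β) := by gcongr
  intro t ht
  obtain ⟨n, hn⟩ := pow_unbounded_of_one_lt t one_lt_two
  exact hdyadic n t ⟨ht, hn.le.trans (pow_le_pow_right₀ one_le_two n.le_succ)⟩

theorem exists_le_mul_one_add_rpow_neg_of_le_dyadic {f : ℝ → ℝ} {θ A β B : ℝ} (hθ : 0 ≤ θ)
    (hβ : 0 ≤ β) (hθβ : θ * 2 ^ β < 1) (hB : ∀ t, 0 ≤ t → f t ≤ B)
    (hrec : ∀ t, 1 ≤ t → f (2 * t) ≤ θ * f t + A * t ^ (-β)) :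
    ∃ C, 0 < C ∧ ∀ t, 0 ≤ t → f t ≤ C * (1 + t) ^ (-β) := by
  have h2β : 1 ≤ (2 : ℝ) ^ β := one_le_rpow one_le_two hβ
  set M := max (max (B * 2 ^ β) (A * 2 ^ β / (1 - θ * 2 ^ β))) 1
  have hM1 : 1 ≤ M := le_max_right _ _
  have hMA : (θ * M + A) * 2 ^ β ≤ M := by
    have : A * 2 ^ β / (1 - θ * 2 ^ β) ≤ M := (le_max_right _ _).trans (le_max_left _ _)
    rw [div_le_iff₀ (by linarith)] at this
    linarith
  have hMB : ∀ s, 0 < s → s ≤ 2 → B ≤ M * s ^ (-β) := by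
    intro s hs0 hs2
    calc B ≤ M * 2 ^ (-β) := by
          rw [rpow_neg zero_le_two, ← div_eq_mul_inv, le_div_iff₀ (by linarith)]
          exact (le_max_left _ _).trans (le_max_left _ _)
      _ ≤ M * s ^ (-β) :=
        mul_le_mul_of_nonneg_left (rpow_le_rpow_of_nonpos hs0 hs2 (by linarith)) (by linarith)
  have hlarge := le_mul_rpow_neg_of_le_dyadic hθ hrec
    (fun t ht => (hB t (by linarith [ht.1])).trans (hMB t (by linarith [ht.1]) ht.2)) hMA
  refine ⟨M * 2 ^ β, by positivity, fun t ht => ?_⟩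
  rcases le_or_gt 1 t with h1 | h1
  · calc f t ≤ M * t ^ (-β) := hlarge t h1
      _ = M * 2 ^ β * (2 * t) ^ (-β) := by
        rw [mul_rpow zero_le_two ht, rpow_neg zero_le_two]; field_simp
      _ ≤ M * 2 ^ β * (1 + t) ^ (-β) :=
        mul_le_mul_of_nonneg_left
          (rpow_le_rpow_of_nonpos (by linarith) (by linarith) (by linarith)) (by positivity)
  · calc f t ≤ M * (1 + t) ^ (-β) := (hB t ht).trans (hMB (1 + t) (by linarith) (by linarith))
      _ ≤ M * 2 ^ β * (1 + t) ^ (-β) := by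
        gcongr; exact le_mul_of_one_le_right (by linarith) h2β

theorem one_div_seven_mul_two_rpow_lt_one {β : ℝ} (hβ : β ≤ 2) : 1 / 7 * (2 : ℝ) ^ β < 1 := by
  have := rpow_le_rpow_of_exponent_le one_le_two hβ
  rw [rpow_two] at this
  linarith

theorem exists_pos_mul_sq_eq {κ a : ℝ} (hκ : 0 < κ) (ha : 0 < a) : ∃ q, 0 < q ∧ κ * q ^ 2 = a :=
  ⟨√(a / κ), by positivity, by rw [sq_sqrt (by positivity)]; field_simp⟩

theorem sub_eq_integral_of_eq_add_integral {E E' : ℝ → ℝ}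
    (hE'int : ∀ t, 0 ≤ t → IntervalIntegrable E' volume 0 t)
    (hE : ∀ t, 0 ≤ t → E t = E 0 + ∫ s in 0..t, E' s) {a b : ℝ} (ha : 0 ≤ a) (hb : 0 ≤ b) :
    E b - E a = ∫ s in a..b, E' s := by
  rw [hE a ha, hE b hb,
    ← intervalIntegral.integral_interval_sub_left (hE'int b hb) (hE'int a ha)]
  ring

theorem antitoneOn_of_eq_add_integral {E E' : ℝ → ℝ}
    (hE'int : ∀ t, 0 ≤ t → IntervalIntegrable E' volume 0 t)
    (hE : ∀ t, 0 ≤ t → E t = E 0 + ∫ s in 0..t, E' s) (hE' : ∀ᵐ s, 0 < s → E' s ≤ 0) :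
    AntitoneOn E (Ici 0) := by
  intro a ha b hb hab
  have hnonpos : ∫ s in a..b, E' s ≤ 0 := by
    rw [intervalIntegral.integral_of_le hab]
    refine setIntegral_nonpos_ae measurableSet_Ioc ?_
    filter_upwards [hE'] with s hs hmem using hs (lt_of_le_of_lt ha hmem.1)
  linarith [sub_eq_integral_of_eq_add_integral hE'int hE ha hb]

theorem mul_one_add_le_of_deriv_le {E E' : ℝ → ℝ} {a b κ L : ℝ} (hab : a ≤ b) (hκ : 0 ≤ κ)
    (hE'int : IntervalIntegrable E' volume a b) (hanti : AntitoneOn E (Icc a b))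
    (hinc : E b - E a = ∫ s in a..b, E' s)
    (hE' : ∀ᵐ s, s ∈ Icc a b → E' s ≤ κ * (L - E s)) :
    E b * (1 + κ * (b - a)) ≤ E a + κ * (b - a) * L := by
  have hEint : IntervalIntegrable E volume a b := (uIcc_of_le hab ▸ hanti).intervalIntegrable
  have hint : ∫ s in a..b, E' s ≤ ∫ s in a..b, κ * (L - E s) :=
    intervalIntegral.integral_mono_ae_restrict hab hE'int
      ((intervalIntegrable_const.sub hEint).const_mul κ)
      ((ae_restrict_iff' measurableSet_Icc).2 hE')
  have hmean : (b - a) * E b ≤ ∫ s in a..b, E s := by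
    simpa [mul_comm] using intervalIntegral.integral_mono_on hab intervalIntegrable_const hEint
      fun s hs => hanti hs (right_mem_Icc.2 hab) hs.2
  rw [intervalIntegral.integral_const_mul, intervalIntegral.integral_sub intervalIntegrable_const
    hEint, intervalIntegral.integral_const, smul_eq_mul] at hint
  nlinarith

theorem intervalIntegral_le_two_mul_sqrt {f : ℝ → ℝ} {C b : ℝ} (hC : 0 ≤ C) (hb : 0 ≤ b)
    (hf : IntervalIntegrable f volume 0 b)
    (hle : ∀ s ∈ Icc 0 b, f s ≤ C * (1 + s) ^ (-(1 / 2) : ℝ)) :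
    ∫ s in 0..b, f s ≤ 2 * C * √(1 + b) := by
  have hrpow : ∫ s in 0..b, (1 + s) ^ (-(1 / 2) : ℝ) = 2 * (√(1 + b) - 1) := by
    rw [intervalIntegral.integral_comp_add_left (fun x => x ^ (-(1 / 2) : ℝ)),
      integral_rpow (Or.inl (by norm_num)), sqrt_eq_rpow]
    norm_num
    ring
  have hcont : IntervalIntegrable (fun s => C * (1 + s) ^ (-(1 / 2) : ℝ)) volume 0 b := by
    refine (ContinuousOn.const_smul ?_ C).intervalIntegrable
    refine (continuousOn_const.add continuousOn_id).rpow_const fun x hx => Or.inl ?_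
    rw [uIcc_of_le hb] at hx
    exact (by linarith [hx.1] : (0 : ℝ) < 1 + x).ne'
  calc ∫ s in 0..b, f s ≤ ∫ s in 0..b, C * (1 + s) ^ (-(1 / 2) : ℝ) :=
        intervalIntegral.integral_mono_on hb hf hcont hle
    _ = 2 * C * (√(1 + b) - 1) := by rw [intervalIntegral.integral_const_mul, hrpow]; ring
    _ ≤ 2 * C * √(1 + b) := by nlinarith

theorem sq_mul_integral_le_integral_norm_sq_mul_add {F : Type*} [NormedAddCommGroup F]
    [MeasurableSpace F] [OpensMeasurableSpace F] {μ : Measure F} {g : F → ℝ} {ρ L : ℝ}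
    (hρ : 0 ≤ ρ) (hg0 : ∀ ξ, 0 ≤ g ξ) (hg : Integrable g μ)
    (hξg : Integrable (fun ξ => ‖ξ‖ ^ 2 * g ξ) μ) (hμ : μ (ball 0 ρ) ≠ ⊤)
    (hL : ∀ᵐ ξ ∂μ, ‖ξ‖ < ρ → g ξ ≤ L) :
    ρ ^ 2 * ∫ ξ, g ξ ∂μ ≤ ∫ ξ, ‖ξ‖ ^ 2 * g ξ ∂μ + ρ ^ 2 * (μ.real (ball 0 ρ) * L) := by
  have hpt : ∀ᵐ ξ ∂μ,
      ρ ^ 2 * g ξ ≤ ‖ξ‖ ^ 2 * g ξ + (ball 0 ρ).indicator (fun _ => ρ ^ 2 * L) ξ := by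
    filter_upwards [hL] with ξ hξ
    by_cases hball : ‖ξ‖ < ρ
    · rw [indicator_of_mem (mem_ball_zero_iff.2 hball)]
      nlinarith [hξ hball, hg0 ξ, norm_nonneg ξ]
    · rw [indicator_of_notMem (fun h => hball (mem_ball_zero_iff.1 h))]
      have := mul_le_mul_of_nonneg_right (pow_le_pow_left₀ hρ (not_lt.1 hball) 2) (hg0 ξ)
      linarith
  have hind : Integrable ((ball (0 : F) ρ).indicator (fun _ => ρ ^ 2 * L)) μ :=
    (integrableOn_const hμ).integrable_indicator measurableSet_ball
  calc ρ ^ 2 * ∫ ξ, g ξ ∂μ = ∫ ξ, ρ ^ 2 * g ξ ∂μ := (integral_const_mul _ _).symm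
    _ ≤ ∫ ξ, (‖ξ‖ ^ 2 * g ξ + (ball 0 ρ).indicator (fun _ => ρ ^ 2 * L) ξ) ∂μ :=
      integral_mono_ae (hg.const_mul _) (hξg.add hind) hpt
    _ = ∫ ξ, ‖ξ‖ ^ 2 * g ξ ∂μ + ρ ^ 2 * (μ.real (ball 0 ρ) * L) := by
      rw [integral_add hξg hind, integral_indicator_const _ measurableSet_ball, smul_eq_mul]
      ring

theorem sq_mul_integral_le_of_norm_le {F G : Type*} [NormedAddCommGroup F] [NormedSpace ℝ F]
    [FiniteDimensional ℝ F] [MeasurableSpace F] [BorelSpace F] [Nontrivial F] {μ : Measure F}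
    [μ.IsAddHaarMeasure] [NormedAddCommGroup G] {f : F → G} {K m ρ : ℝ} (hK : 0 ≤ K)
    (hm : 0 ≤ m) (hρ : 0 ≤ ρ) (hf : Integrable (fun ξ => ‖f ξ‖ ^ 2) μ)
    (hξf : Integrable (fun ξ => ‖ξ‖ ^ 2 * ‖f ξ‖ ^ 2) μ)
    (hbound : ∀ᵐ ξ ∂μ, ‖f ξ‖ ≤ K * (1 + ‖ξ‖ * m)) :
    ρ ^ 2 * ∫ ξ, ‖f ξ‖ ^ 2 ∂μ ≤ ∫ ξ, ‖ξ‖ ^ 2 * ‖f ξ‖ ^ 2 ∂μ +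
      ρ ^ 2 * (K ^ 2 * μ.real (ball 0 1) * ρ ^ Module.finrank ℝ F * (1 + ρ * m) ^ 2) := by
  have hL : ∀ᵐ ξ ∂μ, ‖ξ‖ < ρ → ‖f ξ‖ ^ 2 ≤ (K * (1 + ρ * m)) ^ 2 := by
    filter_upwards [hbound] with ξ hξ hξρ
    gcongr
    exact hξ.trans (by gcongr)
  convert sq_mul_integral_le_integral_norm_sq_mul_add hρ (fun ξ => by positivity) hf hξf
    measure_ball_lt_top.ne hL using 2
  rw [← Measure.addHaar_real_closedBall_eq_addHaar_real_ball μ 0 ρ,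
    Measure.addHaar_real_closedBall μ 0 hρ]
  ring

/-- `E` is the energy `∫ |v|²`, `D` the dissipation `∫ |ξ|² |v|²`, `κ = C₀` and `c = K² |B(0, 1)|`;
the last field is the splitting estimate `sq_mul_integral_le_of_norm_le`. -/
structure IsFourierSplittingEnergy (E E' D : ℝ → ℝ) (κ c : ℝ) : Prop where
  coeff_pos : 0 < κ
  const_nonneg : 0 ≤ c
  nonneg : ∀ t, 0 ≤ t → 0 ≤ E t
  dissipation_nonneg : ∀ t, 0 ≤ D t
  intervalIntegrable_deriv : ∀ t, 0 ≤ t → IntervalIntegrable E' volume 0 t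
  eq_add_integral_deriv : ∀ t, 0 ≤ t → E t = E 0 + ∫ s in 0..t, E' s
  deriv_add_le : ∀ᵐ s, 0 < s → E' s + κ * D s ≤ 0
  le_dissipation_add : ∀ᵐ s, 0 < s → ∀ ρ, 0 < ρ →
    ρ ^ 2 * E s ≤ D s + ρ ^ 2 * (c * ρ ^ 3 * (1 + ρ * (1 + ∫ r in 0..s, E r)) ^ 2)

namespace IsFourierSplittingEnergy

variable {E E' D : ℝ → ℝ} {κ c : ℝ}

theorem antitoneOn (h : IsFourierSplittingEnergy E E' D κ c) : AntitoneOn E (Ici 0) := by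
  refine antitoneOn_of_eq_add_integral h.intervalIntegrable_deriv h.eq_add_integral_deriv ?_
  filter_upwards [h.deriv_add_le] with s hs hs0
  nlinarith [hs hs0, h.dissipation_nonneg s, h.coeff_pos]

theorem le_apply_zero (h : IsFourierSplittingEnergy E E' D κ c) {t : ℝ} (ht : 0 ≤ t) :
    E t ≤ E 0 :=
  h.antitoneOn self_mem_Ici ht ht

theorem intervalIntegrable (h : IsFourierSplittingEnergy E E' D κ c) {a b : ℝ} (ha : 0 ≤ a)
    (hab : a ≤ b) : IntervalIntegrable E volume a b :=
  (h.antitoneOn.mono (uIcc_of_le hab ▸ Icc_subset_Ici_iff hab |>.2 ha)).intervalIntegrable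

theorem integral_nonneg (h : IsFourierSplittingEnergy E E' D κ c) {t : ℝ} (ht : 0 ≤ t) :
    0 ≤ ∫ r in 0..t, E r :=
  intervalIntegral.integral_nonneg ht fun r hr => h.nonneg r hr.1

theorem integral_mono (h : IsFourierSplittingEnergy E E' D κ c) {a b : ℝ} (ha : 0 ≤ a)
    (hab : a ≤ b) : ∫ r in 0..a, E r ≤ ∫ r in 0..b, E r := by
  rw [← intervalIntegral.integral_add_adjacent_intervals (h.intervalIntegrable le_rfl ha)
    (h.intervalIntegrable ha hab)]
  have : 0 ≤ ∫ r in a..b, E r :=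
    intervalIntegral.integral_nonneg hab fun r hr => h.nonneg r (ha.trans hr.1)
  linarith

theorem integral_le_mul_apply_zero (h : IsFourierSplittingEnergy E E' D κ c) {b : ℝ}
    (hb : 0 ≤ b) : ∫ r in 0..b, E r ≤ b * E 0 := by
  simpa [mul_comm] using intervalIntegral.integral_mono_on hb (h.intervalIntegrable le_rfl hb)
    intervalIntegrable_const fun r hr => h.le_apply_zero hr.1

theorem le_div_seven_add (h : IsFourierSplittingEnergy E E' D κ c) {q t X : ℝ} (hq : 0 < q)
    (hκq : κ * q ^ 2 = 6) (ht : 0 < t) (hX : 1 + q / √t * (1 + ∫ r in 0..2 * t, E r) ≤ X) :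
    E (2 * t) ≤ E t / 7 + c * (q / √t) ^ 3 * X ^ 2 := by
  have hκ := h.coeff_pos
  have hc := h.const_nonneg
  set ρ := q / √t
  have hρ : 0 < ρ := by positivity
  have hκρ : κ * ρ ^ 2 * (2 * t - t) = 6 := by
    rw [div_pow, sq_sqrt ht.le, ← hκq]; field_simp; ring
  have hM := h.integral_nonneg (t := 2 * t) (by linarith)
  set L := c * ρ ^ 3 * (1 + ρ * (1 + ∫ r in 0..2 * t, E r)) ^ 2
  have hL0 : 0 ≤ L := mul_nonneg (mul_nonneg hc (pow_nonneg hρ.le 3)) (sq_nonneg _)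
  have hLX : L ≤ c * ρ ^ 3 * X ^ 2 := by simp only [L]; gcongr
  have hE' : ∀ᵐ s, s ∈ Icc t (2 * t) → E' s ≤ κ * ρ ^ 2 * (L - E s) := by
    filter_upwards [h.deriv_add_le, h.le_dissipation_add] with s hdiss hsplit hs
    have hs0 : 0 < s := ht.trans_le hs.1
    have hLs : c * ρ ^ 3 * (1 + ρ * (1 + ∫ r in 0..s, E r)) ^ 2 ≤ L := by
      have := h.integral_mono hs0.le hs.2
      have := h.integral_nonneg hs0.le
      simp only [L]
      gcongr
    have hD : ρ ^ 2 * (E s - L) ≤ D s := by nlinarith [hsplit hs0 ρ hρ]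
    nlinarith [hdiss hs0, mul_le_mul_of_nonneg_left hD hκ.le]
  have key := mul_one_add_le_of_deriv_le (by linarith) (by positivity)
    ((h.intervalIntegrable_deriv t ht.le).symm.trans (h.intervalIntegrable_deriv _ (by linarith)))
    (h.antitoneOn.mono fun s hs => ht.le.trans hs.1)
    (sub_eq_integral_of_eq_add_integral h.intervalIntegrable_deriv h.eq_add_integral_deriv
      ht.le (by linarith)) hE'
  rw [hκρ] at key
  linarith

theorem le_div_seven_add_rpow_neg_half (h : IsFourierSplittingEnergy E E' D κ c) {q t : ℝ}
    (hq : 0 < q) (hκq : κ * q ^ 2 = 6) (ht : 1 ≤ t) :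
    E (2 * t) ≤ 1 / 7 * E t + c * q ^ 3 * (1 + q + 2 * E 0 * q) ^ 2 * t ^ (-(1 / 2) : ℝ) := by
  have hu : 1 ≤ √t := one_le_sqrt.2 ht
  have hsq : √t ^ 2 = t := sq_sqrt (by linarith)
  have hM := h.integral_le_mul_apply_zero (b := 2 * t) (by linarith)
  have hX : 1 + q / √t * (1 + ∫ r in 0..2 * t, E r) ≤ (1 + q + 2 * E 0 * q) * √t := by
    have : q / √t * (1 + ∫ r in 0..2 * t, E r) ≤ q / √t * (1 + 2 * t * E 0) := by gcongr
    have : q / √t * (1 + 2 * t * E 0) = q / √t + 2 * E 0 * q * √t := by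
      field_simp
      rw [hsq]
      ring
    have : q / √t ≤ q * √t := (div_le_self hq.le hu).trans (le_mul_of_one_le_right hq.le hu)
    nlinarith [h.nonneg 0 le_rfl]
  refine (h.le_div_seven_add hq hκq (by linarith) hX).trans (le_of_eq ?_)
  rw [rpow_neg (by linarith), ← sqrt_eq_rpow]
  field_simp

theorem le_div_seven_add_rpow_neg_three_halves (h : IsFourierSplittingEnergy E E' D κ c)
    {q C t : ℝ} (hq : 0 < q) (hκq : κ * q ^ 2 = 6) (hC : 0 ≤ C)
    (hdecay : ∀ t, 0 ≤ t → E t ≤ C * (1 + t) ^ (-(1 / 2) : ℝ)) (ht : 1 ≤ t) :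
    E (2 * t) ≤ 1 / 7 * E t + c * q ^ 3 * (1 + q + 2 * √3 * C * q) ^ 2 * t ^ (-(3 / 2) : ℝ) := by
  have hu : 1 ≤ √t := one_le_sqrt.2 ht
  have hM : ∫ r in 0..2 * t, E r ≤ 2 * √3 * C * √t := by
    refine (intervalIntegral_le_two_mul_sqrt hC (by linarith)
      (h.intervalIntegrable le_rfl (by linarith)) fun s hs => hdecay s hs.1).trans ?_
    have : √(1 + 2 * t) ≤ √3 * √t := by
      rw [← sqrt_mul (by norm_num)]; exact sqrt_le_sqrt (by linarith)
    have := mul_le_mul_of_nonneg_left this (by positivity : (0 : ℝ) ≤ 2 * C)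
    linarith
  have hX : 1 + q / √t * (1 + ∫ r in 0..2 * t, E r) ≤ 1 + q + 2 * √3 * C * q := by
    have : q / √t * (1 + ∫ r in 0..2 * t, E r) ≤ q / √t * (1 + 2 * √3 * C * √t) := by gcongr
    have : q / √t * (1 + 2 * √3 * C * √t) = q / √t + 2 * √3 * C * q := by field_simp
    have : q / √t ≤ q := div_le_self hq.le hu
    linarith
  refine (h.le_div_seven_add hq hκq (by linarith) hX).trans (le_of_eq ?_)
  rw [rpow_neg (by linarith), show (3 / 2 : ℝ) = (1 / 2 : ℝ) * (3 : ℕ) by norm_num,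
    rpow_mul (by linarith), rpow_natCast, ← sqrt_eq_rpow]
  ring

theorem exists_le_mul_one_add_rpow_neg_three_halves (h : IsFourierSplittingEnergy E E' D κ c) :
    ∃ C, 0 < C ∧ ∀ t, 0 ≤ t → E t ≤ C * (1 + t) ^ (-(3 / 2) : ℝ) := by
  obtain ⟨q, hq, hκq⟩ := exists_pos_mul_sq_eq h.coeff_pos (by norm_num : (0 : ℝ) < 6)
  obtain ⟨C, hC, hdecay⟩ := exists_le_mul_one_add_rpow_neg_of_le_dyadic (by norm_num)
    (by norm_num) (one_div_seven_mul_two_rpow_lt_one (by norm_num)) (fun t => h.le_apply_zero)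
    fun t => h.le_div_seven_add_rpow_neg_half hq hκq
  exact exists_le_mul_one_add_rpow_neg_of_le_dyadic (by norm_num) (by norm_num)
    (one_div_seven_mul_two_rpow_lt_one (by norm_num)) (fun t => h.le_apply_zero)
    fun t => h.le_div_seven_add_rpow_neg_three_halves hq hκq hC.le hdecay

end IsFourierSplittingEnergy

theorem decay_main_case1_general
    (v : ℝ → EuclideanSpace ℝ (Fin 3) → ℂ)
    (hL2 : ∀ t : ℝ, Integrable (fun ξ : EuclideanSpace ℝ (Fin 3) => ‖v t ξ‖ ^ 2))
    (C0 : ℝ) (hC0 : 0 < C0) (E' : ℝ → ℝ)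
    (hE'int : ∀ t : ℝ, 0 ≤ t → IntervalIntegrable E' volume 0 t)
    (hEAC : ∀ t : ℝ, 0 ≤ t →
      (∫ ξ, ‖v t ξ‖ ^ 2) = (∫ ξ, ‖v 0 ξ‖ ^ 2) + ∫ s in (0:ℝ)..t, E' s)
    (hDfin : ∀ᵐ t ∂(volume : Measure ℝ), 0 < t →
      Integrable (fun ξ : EuclideanSpace ℝ (Fin 3) => ‖ξ‖ ^ 2 * ‖v t ξ‖ ^ 2))
    (hdiss : ∀ᵐ t ∂(volume : Measure ℝ), 0 < t →
      E' t + C0 * ∫ ξ, ‖ξ‖ ^ 2 * ‖v t ξ‖ ^ 2 ≤ 0)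
    (K : ℝ) (hK : 0 < K)
    (hptw : ∀ t : ℝ, 0 ≤ t →
      ∀ᵐ ξ ∂(volume : Measure (EuclideanSpace ℝ (Fin 3))),
        ‖v t ξ‖ ≤ K * (1 + ‖ξ‖ * (1 + ∫ s in (0:ℝ)..t, ∫ η, ‖v s η‖ ^ 2))) :
    ∃ C : ℝ, 0 < C ∧ ∀ t : ℝ, 0 ≤ t →
      (∫ ξ, ‖v t ξ‖ ^ 2) ≤ C * (1 + t) ^ (-(3 / 2) : ℝ) := by
  have hE : ∀ t, 0 ≤ ∫ ξ, ‖v t ξ‖ ^ 2 := fun t => integral_nonneg fun _ => by positivity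
  refine IsFourierSplittingEnergy.exists_le_mul_one_add_rpow_neg_three_halves
    (E := fun t => ∫ ξ, ‖v t ξ‖ ^ 2) (D := fun t => ∫ ξ, ‖ξ‖ ^ 2 * ‖v t ξ‖ ^ 2)
    (c := K ^ 2 * volume.real (ball (0 : EuclideanSpace ℝ (Fin 3)) 1))
    ⟨hC0, by positivity, fun t _ => hE t,
      fun t => integral_nonneg fun _ => by positivity, hE'int, hEAC, hdiss, ?_⟩
  filter_upwards [hDfin] with s hDs hs ρ hρ
  have hM : 0 ≤ 1 + ∫ r in 0..s, ∫ η, ‖v r η‖ ^ 2 :=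
    add_nonneg zero_le_one (intervalIntegral.integral_nonneg hs.le fun r _ => hE r)
  simpa [finrank_euclideanSpace_fin, mul_assoc] using
    sq_mul_integral_le_of_norm_le hK.le hM hρ.le (hL2 s) (hDs hs) (hptw s hs.le)

/-- Abstract form of the main `L²`-decay theorem (case `p⁻ ≥ 3`). If `E(t) = ∫ |v(t,ξ)|² dξ` is
locally absolutely continuous (encoded by `E t = E 0 + ∫₀ᵗ E'` with `E'` locally integrable),
satisfies the dissipation inequality `E'(t) + C₀ ∫ |ξ|²|v(t,ξ)|² dξ ≤ 0` a.e., and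
`|v(t,ξ)| ≤ K (1 + |ξ|(1 + ∫₀ᵗ E(s) ds))` for all `t ≥ 0` and a.e. `ξ`, then
`E(t) ≤ C (1+t)^{-3/2}` for a constant `C = C(K, C₀, E(0))`. -/
theorem decay_main_case1
    (v : ℝ → EuclideanSpace ℝ (Fin 3) → ℂ) (hv : Measurable (Function.uncurry v))
    (hL2 : ∀ t : ℝ, Integrable (fun ξ : EuclideanSpace ℝ (Fin 3) => ‖v t ξ‖ ^ 2))
    (C0 : ℝ) (hC0 : 0 < C0) (E' : ℝ → ℝ)
    (hE'int : ∀ t : ℝ, 0 ≤ t → IntervalIntegrable E' volume 0 t)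
    (hEAC : ∀ t : ℝ, 0 ≤ t →
      (∫ ξ, ‖v t ξ‖ ^ 2) = (∫ ξ, ‖v 0 ξ‖ ^ 2) + ∫ s in (0:ℝ)..t, E' s)
    (hDfin : ∀ᵐ t ∂(volume : Measure ℝ), 0 < t →
      Integrable (fun ξ : EuclideanSpace ℝ (Fin 3) => ‖ξ‖ ^ 2 * ‖v t ξ‖ ^ 2))
    (hdiss : ∀ᵐ t ∂(volume : Measure ℝ), 0 < t →
      E' t + C0 * ∫ ξ, ‖ξ‖ ^ 2 * ‖v t ξ‖ ^ 2 ≤ 0)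
    (K : ℝ) (hK : 0 < K)
    (hptw : ∀ t : ℝ, 0 ≤ t →
      ∀ᵐ ξ ∂(volume : Measure (EuclideanSpace ℝ (Fin 3))),
        ‖v t ξ‖ ≤ K * (1 + ‖ξ‖ * (1 + ∫ s in (0:ℝ)..t, ∫ η, ‖v s η‖ ^ 2))) :
    ∃ C : ℝ, 0 < C ∧ ∀ t : ℝ, 0 ≤ t →
      (∫ ξ, ‖v t ξ‖ ^ 2) ≤ C * (1 + t) ^ (-(3 / 2) : ℝ) :=
  decay_main_case1_general v hL2 C0 hC0 E' hE'int hEAC hDfin hdiss K hK hptw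
end

section
/- Let $v : [0,\infty) \times \mathbb{R}^3 \to \mathbb{C}$ be measurable with $v(t,\cdot) \in L^2(\mathbb{R}^3;\mathbb{C})$ for every $t$, set $E(t) = \int_{\mathbb{R}^3} |v(t,\xi)|^2\,d\xi$, and suppose $E$ is locally absolutely continuous, $\int_{\mathbb{R}^3}|\xi|^2 |v(t,\xi)|^2\,d\xi < \infty$ for a.e. $t$, and there is $C_0 > 0$ with $E'(t) + C_0 \int_{\mathbb{R}^3} |\xi|^2 |v(t,\xi)|^2\,d\xi \le 0$ for a.e. $t > 0$. Let $\alpha \ge 1$ and $\beta \in [0,1)$ satisfy $2\alpha > 2 - \beta$, and assume there is $K > 0$ such that for every $t \ge 0$ and almost every $\xi$: $|v(t,\xi)| \le K\Big(1 + |\xi|\Big(1 + \big(\int_0^t E(s)^{\frac{\alpha}{2-\beta}}\,ds\big)^{\frac{2-\beta}{2}} + \int_0^t E(s)\,ds\Big)\Big)$. Then there is a constant $C$, depending only on $K$, $C_0$, $E(0)$, $\alpha$ and $\beta$, such that $E(t) \le C (1+t)^{-3/2}$ for all $t \ge 0$. -/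
/-!
Fourier splitting without Gronwall. Split frequencies at `|ξ| = ρ`: outside the ball the
dissipation damps the energy at rate `C₀ρ²`, inside it the pointwise bound caps the energy by
`K²|B₁|ρ³(1 + ρG)²`, where `G` is the bracket multiplying `|ξ|` in that bound. Integrating over
`[t/2, t]` with `ρ² ∼ 1/(1+t)` and using that the energy `E` is nonincreasing gives
`6 E(t) ≤ E(t/2) + D (1+t)^{-γ}` as soon as `G(t) ≲ (1+t)^g` with `2g ≤ 5/2 - γ`, and this
recursion yields `E(t) ≲ (1+t)^{-γ}`. Conversely `G` is built from time integrals of `E`, so a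
decay rate for `E` lowers the growth exponent of `G`; three rounds take the rate from `0` to
`1/2`, `1` and `3/2`.
-/

open MeasureTheory Set Metric

def IsPolyBounded (f : ℝ → ℝ) (a : ℝ) : Prop :=
  ∃ C, 0 < C ∧ ∀ t, 0 ≤ t → f t ≤ C * (1 + t) ^ a

lemma integral_one_add_rpow {a : ℝ} (ha : -1 < a) (t : ℝ) :
    ∫ u in (0 : ℝ)..t, (1 + u) ^ a = ((1 + t) ^ (a + 1) - 1) / (a + 1) := by
  rw [intervalIntegral.integral_comp_add_left (fun u => u ^ a), integral_rpow (Or.inl ha)]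
  simp

namespace IsPolyBounded

variable {f g : ℝ → ℝ} {a b : ℝ}

lemma of_nonneg_const {C : ℝ} (hC : 0 ≤ C) (h : ∀ t, 0 ≤ t → f t ≤ C * (1 + t) ^ a) :
    IsPolyBounded f a :=
  ⟨C + 1, by linarith, fun t ht => (h t ht).trans <|
    mul_le_mul_of_nonneg_right (by linarith) (by positivity)⟩

lemma mono (hf : IsPolyBounded f a) (hab : a ≤ b) : IsPolyBounded f b := by
  obtain ⟨C, hC, h⟩ := hf
  exact ⟨C, hC, fun t ht => (h t ht).trans <| mul_le_mul_of_nonneg_left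
    (Real.rpow_le_rpow_of_exponent_le (by linarith) hab) hC.le⟩

lemma const (c : ℝ) (ha : 0 ≤ a) : IsPolyBounded (fun _ => c) a :=
  ⟨max c 1, by positivity, fun t ht => (le_max_left c 1).trans <|
    le_mul_of_one_le_right (by positivity) (Real.one_le_rpow (by linarith) ha)⟩

lemma add (hf : IsPolyBounded f a) (hg : IsPolyBounded g a) :
    IsPolyBounded (fun t => f t + g t) a := by
  obtain ⟨C, hC, hfC⟩ := hf
  obtain ⟨D, hD, hgD⟩ := hg
  exact ⟨C + D, by positivity, fun t ht => by linarith [hfC t ht, hgD t ht]⟩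

lemma rpow (hf : IsPolyBounded f a) (hf0 : ∀ t, 0 ≤ t → 0 ≤ f t) {θ : ℝ} (hθ : 0 ≤ θ) :
    IsPolyBounded (fun t => f t ^ θ) (a * θ) := by
  obtain ⟨C, hC, h⟩ := hf
  refine ⟨C ^ θ, by positivity, fun t ht => ?_⟩
  calc f t ^ θ ≤ (C * (1 + t) ^ a) ^ θ := Real.rpow_le_rpow (hf0 t ht) (h t ht) hθ
    _ = C ^ θ * (1 + t) ^ (a * θ) := by
      rw [Real.mul_rpow hC.le (by positivity), ← Real.rpow_mul (by linarith)]

lemma intervalIntegral (hf : IsPolyBounded f a) (ha : -1 < a)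
    (hint : ∀ t, 0 ≤ t → IntervalIntegrable f volume 0 t) :
    IsPolyBounded (fun t => ∫ u in (0 : ℝ)..t, f u) (a + 1) := by
  obtain ⟨C, hC, h⟩ := hf
  have ha1 : 0 < a + 1 := by linarith
  refine of_nonneg_const (C := C / (a + 1)) (by positivity) fun t ht => ?_
  have hpow : IntervalIntegrable (fun u => C * (1 + u) ^ a) volume 0 t := by
    refine (ContinuousOn.rpow_const (by fun_prop) fun u hu => Or.inl ?_).intervalIntegrable
      |>.const_mul C
    rw [uIcc_of_le ht] at hu
    linarith [hu.1]
  calc ∫ u in (0 : ℝ)..t, f u ≤ ∫ u in (0 : ℝ)..t, C * (1 + u) ^ a :=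
        intervalIntegral.integral_mono_on ht (hint t ht) hpow fun u hu => h u hu.1
    _ = C * (((1 + t) ^ (a + 1) - 1) / (a + 1)) := by
        rw [intervalIntegral.integral_const_mul, integral_one_add_rpow ha t]
    _ ≤ C / (a + 1) * (1 + t) ^ (a + 1) := by
        rw [mul_div_assoc', div_mul_eq_mul_div]
        gcongr
        linarith

end IsPolyBounded

lemma AntitoneOn.intervalIntegrable_of_Ici {f : ℝ → ℝ} {a t : ℝ} (hf : AntitoneOn f (Ici a))
    (ht : a ≤ t) : IntervalIntegrable f volume a t :=
  (hf.mono (by rw [uIcc_of_le ht]; exact Icc_subset_Ici_self)).intervalIntegrable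

lemma isPolyBounded_one_add_integral_rpow_add_integral {E : ℝ → ℝ} (hE0 : ∀ t, 0 ≤ E t)
    (hanti : AntitoneOn E (Ici 0)) {θ q a b g : ℝ} (hθ : 0 ≤ θ) (hq : 0 ≤ q)
    (hEθ : IsPolyBounded (fun t => E t ^ θ) a) (hE : IsPolyBounded E b)
    (ha : -1 < a) (hb : -1 < b) (hg : 0 ≤ g) (hag : (a + 1) * q ≤ g) (hbg : b + 1 ≤ g) :
    IsPolyBounded (fun s => 1 + (∫ u in (0 : ℝ)..s, E u ^ θ) ^ q + ∫ u in (0 : ℝ)..s, E u) g := by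
  have hantiθ : AntitoneOn (fun t => E t ^ θ) (Ici 0) := fun x hx y hy hxy =>
    Real.rpow_le_rpow (hE0 y) (hanti hx hy hxy) hθ
  have hIθ := (hEθ.intervalIntegral ha fun t ht => hantiθ.intervalIntegrable_of_Ici ht).rpow
    (fun t ht => intervalIntegral.integral_nonneg ht fun u _ => Real.rpow_nonneg (hE0 u) θ) hq
  have hI := hE.intervalIntegral hb fun t ht => hanti.intervalIntegrable_of_Ici ht
  exact ((IsPolyBounded.const 1 hg).add (hIθ.mono hag)).add (hI.mono hbg)

lemma two_rpow_le_three {γ : ℝ} (hγ : γ ≤ 3 / 2) : (2 : ℝ) ^ γ ≤ 3 := by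
  have h32 : ((2 : ℝ) ^ (3 / 2 : ℝ)) ^ 2 = 8 := by
    rw [← Real.rpow_natCast, ← Real.rpow_mul (by norm_num)]
    norm_num
  have := Real.rpow_le_rpow_of_exponent_le (x := 2) (by norm_num) hγ
  nlinarith [Real.rpow_nonneg (x := (2 : ℝ)) (by norm_num) (3 / 2)]

lemma forall_nonneg_of_halving {P : ℝ → Prop} (base : ∀ t ∈ Icc (0 : ℝ) 1, P t)
    (step : ∀ t, 1 ≤ t → P (t / 2) → P t) : ∀ t, 0 ≤ t → P t := by
  have key : ∀ n : ℕ, ∀ t, 0 ≤ t → t ≤ 2 ^ n → P t := by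
    intro n
    induction n with
    | zero => exact fun t ht ht1 => base t ⟨ht, by simpa using ht1⟩
    | succ n ih =>
      intro t ht htn
      rcases le_or_gt t 1 with h1 | h1
      · exact base t ⟨ht, h1⟩
      · exact step t h1.le (ih _ (by linarith) (by rw [pow_succ] at htn; linarith))
  intro t ht
  obtain ⟨n, hn⟩ := pow_unbounded_of_one_lt t (by norm_num : (1 : ℝ) < 2)
  exact key n t ht hn.le

lemma isPolyBounded_of_halving {E : ℝ → ℝ} {D γ : ℝ} (hanti : AntitoneOn E (Ici 0))
    (hD : 0 ≤ D) (hγ0 : 0 ≤ γ) (hγ : γ ≤ 3 / 2)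
    (hstep : ∀ t, 1 ≤ t → 6 * E t ≤ E (t / 2) + D * (1 + t) ^ (-γ)) :
    IsPolyBounded E (-γ) := by
  set C := 3 * |E 0| + D + 1
  have hC : 0 < C := by positivity
  have h2γ := two_rpow_le_three hγ
  refine ⟨C, hC, forall_nonneg_of_halving (fun t ht => ?_) fun t ht ih => ?_⟩
  · have h : (2 : ℝ) ^ (-γ) ≤ (1 + t) ^ (-γ) :=
      Real.rpow_le_rpow_of_nonpos (by linarith [ht.1]) (by linarith [ht.2]) (by linarith)
    rw [Real.rpow_neg (by norm_num)] at h
    have h3 : 1 / 3 ≤ ((2 : ℝ) ^ γ)⁻¹ := by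
      rw [one_div]; exact inv_anti₀ (by positivity) h2γ
    calc E t ≤ E 0 := hanti self_mem_Ici ht.1 ht.1
      _ ≤ C * (1 / 3) := by linarith [le_abs_self (E 0)]
      _ ≤ C * (1 + t) ^ (-γ) := by gcongr; linarith
  · have hhalf : (1 + t / 2) ^ (-γ) ≤ 3 * (1 + t) ^ (-γ) := calc
      (1 + t / 2) ^ (-γ) ≤ ((1 + t) / 2) ^ (-γ) :=
        Real.rpow_le_rpow_of_nonpos (by positivity) (by linarith) (by linarith)
      _ = 2 ^ γ * (1 + t) ^ (-γ) := by
        rw [Real.div_rpow (by linarith) (by norm_num), Real.rpow_neg (by norm_num : (0 : ℝ) ≤ 2),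
          div_inv_eq_mul, mul_comm]
      _ ≤ 3 * (1 + t) ^ (-γ) := by gcongr
    have hpos : 0 ≤ (1 + t) ^ (-γ) := by positivity
    have hD3 : D * (1 + t) ^ (-γ) ≤ 3 * C * (1 + t) ^ (-γ) :=
      mul_le_mul_of_nonneg_right (by linarith [abs_nonneg (E 0)]) hpos
    nlinarith [hstep t ht, mul_le_mul_of_nonneg_left hhalf hC.le]

/-- The energy inequality integrated over `[τ, t]` after splitting frequencies at `|ξ| = ρ`:
the part of the energy outside the ball is damped at rate `c ρ²`, the part inside is at most
`Q ρ³ (1 + ρ W)²` when `W` bounds `G` on `[τ, t]`. -/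
def FourierSplitting (E G : ℝ → ℝ) (c Q : ℝ) : Prop :=
  ∀ ρ W τ t, 0 < ρ → 0 ≤ τ → τ ≤ t → (∀ s ∈ Icc τ t, G s ≤ W) →
    E t * (1 + c * ρ ^ 2 * (t - τ)) ≤ E τ + c * ρ ^ 2 * (t - τ) * (Q * ρ ^ 3 * (1 + ρ * W) ^ 2)

namespace FourierSplitting

variable {E G : ℝ → ℝ} {c Q : ℝ}

lemma halving_step (h : FourierSplitting E G c Q) (hc : 0 < c) (hQ : 0 ≤ Q)
    (hE0 : ∀ t, 0 ≤ E t) {g γ : ℝ} (hG : IsPolyBounded G g) (hg : 0 ≤ g) (hγ : γ ≤ 3 / 2)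
    (hγg : 2 * g ≤ 5 / 2 - γ) :
    ∃ D, 0 ≤ D ∧ ∀ t, 1 ≤ t → 6 * E t ≤ E (t / 2) + D * (1 + t) ^ (-γ) := by
  obtain ⟨M, hM, hGM⟩ := hG
  -- `ρ = σ r` with `ρ² = 20 / (c (1 + t))`, so that the damping factor on `[t/2, t]` is `≥ 5`.
  set σ := Real.sqrt (20 / c)
  have hσ : σ ^ 2 = 20 / c := Real.sq_sqrt (by positivity)
  refine ⟨20 * Q * (σ ^ 3 + σ ^ 5 * M ^ 2), by positivity, fun t ht => ?_⟩
  set e := 1 + t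
  have he1 : 1 ≤ e := by linarith
  have he : 0 < e := by positivity
  set r := e ^ (-(1 / 2) : ℝ)
  have hr : ∀ n : ℕ, r ^ n = e ^ (-(n / 2 : ℝ)) := fun n => by
    rw [← Real.rpow_natCast, ← Real.rpow_mul he.le]; ring_nf
  have hr2 : r ^ 2 = e⁻¹ := by rw [hr]; norm_num [Real.rpow_neg_one]
  set W := M * e ^ g
  have hW : ∀ s ∈ Icc (t / 2) t, G s ≤ W := fun s hs =>
    (hGM s (by linarith [hs.1])).trans <| mul_le_mul_of_nonneg_left
      (Real.rpow_le_rpow (by linarith [hs.1]) (by linarith [hs.2]) hg) hM.le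
  have hcoef : c * (σ * r) ^ 2 * (t - t / 2) = 10 * t / e := by
    rw [mul_pow, hσ, hr2]; field_simp; ring
  have hcoef5 : 5 ≤ 10 * t / e := by rw [le_div_iff₀ he]; linarith
  have hcoef10 : 10 * t / e ≤ 10 := by rw [div_le_iff₀ he]; linarith
  have hsplit := h (σ * r) W (t / 2) t (by positivity) (by linarith) (by linarith) hW
  rw [hcoef] at hsplit
  have herr : 10 * t / e * (Q * (σ * r) ^ 3 * (1 + σ * r * W) ^ 2) ≤
      20 * Q * (σ ^ 3 + σ ^ 5 * M ^ 2) * e ^ (-γ) := by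
    have h3 : r ^ 3 ≤ e ^ (-γ) := by
      rw [hr]; exact Real.rpow_le_rpow_of_exponent_le he1 (by push_cast; linarith)
    have h5 : r ^ 5 * W ^ 2 ≤ M ^ 2 * e ^ (-γ) := by
      rw [hr, mul_pow, ← Real.rpow_natCast (e ^ g), ← Real.rpow_mul he.le]
      calc e ^ (-((5 : ℕ) / 2 : ℝ)) * (M ^ 2 * e ^ (g * (2 : ℕ)))
          = M ^ 2 * e ^ (2 * g - 5 / 2) := by
            rw [mul_left_comm, ← Real.rpow_add he]; ring_nf
        _ ≤ M ^ 2 * e ^ (-γ) := by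
            gcongr
            linarith
    calc 10 * t / e * (Q * (σ * r) ^ 3 * (1 + σ * r * W) ^ 2)
        ≤ 10 * (Q * (σ * r) ^ 3 * (2 * (1 + (σ * r * W) ^ 2))) := by
          gcongr
          nlinarith [sq_nonneg (1 - σ * r * W)]
      _ = 20 * Q * (σ ^ 3 * r ^ 3 + σ ^ 5 * (r ^ 5 * W ^ 2)) := by ring
      _ ≤ 20 * Q * (σ ^ 3 * e ^ (-γ) + σ ^ 5 * (M ^ 2 * e ^ (-γ))) := by gcongr
      _ = 20 * Q * (σ ^ 3 + σ ^ 5 * M ^ 2) * e ^ (-γ) := by ring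
  nlinarith [hE0 t]

lemma isPolyBounded (h : FourierSplitting E G c Q) (hc : 0 < c) (hQ : 0 ≤ Q)
    (hE0 : ∀ t, 0 ≤ E t) (hanti : AntitoneOn E (Ici 0)) {g γ : ℝ} (hG : IsPolyBounded G g)
    (hg : 0 ≤ g) (hγ0 : 0 ≤ γ) (hγ : γ ≤ 3 / 2) (hγg : 2 * g ≤ 5 / 2 - γ) :
    IsPolyBounded E (-γ) := by
  obtain ⟨D, hD, hstep⟩ := h.halving_step hc hQ hE0 hG hg hγ hγg
  exact isPolyBounded_of_halving hanti hD hγ0 hγ hstep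

lemma isPolyBounded_three_halves {θ q : ℝ}
    (h : FourierSplitting E
      (fun s => 1 + (∫ u in (0 : ℝ)..s, E u ^ θ) ^ q + ∫ u in (0 : ℝ)..s, E u) c Q)
    (hc : 0 < c) (hQ : 0 ≤ Q) (hE0 : ∀ t, 0 ≤ E t) (hanti : AntitoneOn E (Ici 0))
    (hθ : 1 / 2 < θ) (hq0 : 0 ≤ q) (hq1 : q ≤ 1) (hθq : 1 / 2 ≤ θ * q) :
    IsPolyBounded E (-(3 / 2)) := by
  have hE0' : ∀ t, 0 ≤ t → 0 ≤ E t := fun t _ => hE0 t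
  have stage : ∀ {a b g γ : ℝ}, IsPolyBounded (fun t => E t ^ θ) a → IsPolyBounded E b →
      -1 < a → -1 < b → 0 ≤ g → (a + 1) * q ≤ g → b + 1 ≤ g →
      0 ≤ γ → γ ≤ 3 / 2 → 2 * g ≤ 5 / 2 - γ → IsPolyBounded E (-γ) :=
    fun hEθ hE ha hb hg hag hbg hγ0 hγ hγg => h.isPolyBounded hc hQ hE0 hanti
      (isPolyBounded_one_add_integral_rpow_add_integral hE0 hanti (by linarith) hq0 hEθ hE
        ha hb hg hag hbg) hg hγ0 hγ hγg
  have hdecay₀ : IsPolyBounded E 0 :=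
    ⟨E 0 + 1, by linarith [hE0 0], fun t ht => by
      simpa using (hanti self_mem_Ici ht ht).trans (lt_add_one (E 0)).le⟩
  have hdecay₁ : IsPolyBounded E (-(1 / 2)) :=
    stage (g := 1) ((hdecay₀.rpow hE0' (by linarith)).mono (b := 0) (by simp)) hdecay₀
      (by norm_num) (by norm_num) (by norm_num) (by linarith) (by norm_num)
      (by norm_num) (by norm_num) (by norm_num)
  have hdecay₂ : IsPolyBounded E (-1) := by
    refine stage (g := 3 / 4) ((hdecay₁.rpow hE0' (by linarith)).mono (le_max_left _ (-(1 / 2))))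
      hdecay₁ (lt_max_of_lt_right (by norm_num)) (by norm_num) (by norm_num) ?_ (by norm_num)
      (by norm_num) (by norm_num) (by norm_num)
    rcases le_total (-(1 / 2) * θ) (-(1 / 2)) with hθ' | hθ'
    · rw [max_eq_right hθ']; nlinarith
    · rw [max_eq_left hθ']; nlinarith
  exact stage (g := 1 / 2) ((hdecay₂.rpow hE0' (by linarith)).mono (b := -(1 / 2)) (by linarith))
    (hdecay₂.mono (b := -(1 / 2)) (by norm_num))
    (by norm_num) (by norm_num) (by norm_num) (by nlinarith) (by norm_num)
    (by norm_num) (by norm_num) (by norm_num)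

end FourierSplitting

section EnergyIdentity

variable {E E' : ℝ → ℝ} (hE'int : ∀ t, 0 ≤ t → IntervalIntegrable E' volume 0 t)
  (hEAC : ∀ t, 0 ≤ t → E t = E 0 + ∫ s in (0 : ℝ)..t, E' s)
include hE'int hEAC

lemma sub_le_of_ae_le {τ t B : ℝ} (hτ : 0 ≤ τ) (hτt : τ ≤ t)
    (h : ∀ᵐ s, s ∈ Ioc τ t → E' s ≤ B) : E t - E τ ≤ (t - τ) * B := by
  have hint := (hE'int τ hτ).symm.trans (hE'int t (hτ.trans hτt))
  have hdiff : E t - E τ = ∫ s in τ..t, E' s := by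
    rw [hEAC t (hτ.trans hτt), hEAC τ hτ, add_sub_add_left_eq_sub,
      intervalIntegral.integral_interval_sub_left (hE'int t (hτ.trans hτt)) (hE'int τ hτ)]
  calc E t - E τ = ∫ s in τ..t, E' s := hdiff
    _ ≤ ∫ _ in τ..t, B := by
      rw [intervalIntegral.integral_of_le hτt, intervalIntegral.integral_of_le hτt]
      exact setIntegral_mono_ae_restrict hint.1 (integrableOn_const measure_Ioc_lt_top.ne) <|
        (ae_restrict_iff' measurableSet_Ioc).2 h
    _ = (t - τ) * B := by simp

lemma antitoneOn_of_ae_deriv_nonpos (h : ∀ᵐ s, 0 < s → E' s ≤ 0) : AntitoneOn E (Ici 0) :=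
  fun τ hτ t _ hτt => by
    have := sub_le_of_ae_le hE'int hEAC hτ hτt (B := 0) <| by
      filter_upwards [h] with s hs hsI using hs (lt_of_le_of_lt hτ hsI.1)
    linarith

lemma fourierSplitting_of_ae_deriv_le {G : ℝ → ℝ} {c Q : ℝ} (hc : 0 ≤ c)
    (hanti : AntitoneOn E (Ici 0))
    (h : ∀ᵐ s, 0 < s → ∀ ρ W, 0 < ρ → G s ≤ W →
      E' s ≤ -(c * ρ ^ 2) * E s + c * ρ ^ 2 * (Q * ρ ^ 3 * (1 + ρ * W) ^ 2)) :
    FourierSplitting E G c Q := by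
  intro ρ W τ t hρ hτ hτt hW
  have := sub_le_of_ae_le hE'int hEAC hτ hτt
    (B := -(c * ρ ^ 2) * E t + c * ρ ^ 2 * (Q * ρ ^ 3 * (1 + ρ * W) ^ 2)) <| by
    filter_upwards [h] with s hs hsI
    have hs0 : 0 ≤ s := hτ.trans hsI.1.le
    refine (hs (hτ.trans_lt hsI.1) ρ W hρ (hW s (Ioc_subset_Icc_self hsI))).trans ?_
    have := mul_le_mul_of_nonneg_left (hanti hs0 (hs0.trans hsI.2) hsI.2)
      (mul_nonneg hc (sq_nonneg ρ))
    linarith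
  nlinarith

end EnergyIdentity

lemma sq_mul_integral_norm_sq_le {V F : Type*} [NormedAddCommGroup V] [MeasurableSpace V]
    [BorelSpace V] [ProperSpace V] [NormedAddCommGroup F] {μ : Measure V}
    [IsFiniteMeasureOnCompacts μ] {f : V → F}
    (hf : Integrable (fun ξ => ‖f ξ‖ ^ 2) μ) (hfξ : Integrable (fun ξ => ‖ξ‖ ^ 2 * ‖f ξ‖ ^ 2) μ)
    {ρ B : ℝ} (hρ : 0 ≤ ρ) (hB : ∀ᵐ ξ ∂μ, ‖ξ‖ ≤ ρ → ‖f ξ‖ ≤ B) :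
    ρ ^ 2 * ∫ ξ, ‖f ξ‖ ^ 2 ∂μ ≤
      ∫ ξ, ‖ξ‖ ^ 2 * ‖f ξ‖ ^ 2 ∂μ + ρ ^ 2 * (B ^ 2 * μ.real (closedBall 0 ρ)) := by
  set S := closedBall (0 : V) ρ
  have hlow : ∫ ξ in S, ‖f ξ‖ ^ 2 ∂μ ≤ B ^ 2 * μ.real S := by
    rw [mul_comm, ← smul_eq_mul, ← setIntegral_const]
    refine setIntegral_mono_ae_restrict hf.integrableOn
      (integrableOn_const measure_closedBall_lt_top.ne) ?_
    filter_upwards [ae_restrict_of_ae hB,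
      ae_restrict_mem measurableSet_closedBall] with ξ hξ hξS
    exact pow_le_pow_left₀ (norm_nonneg _) (hξ (mem_closedBall_zero_iff.1 hξS)) 2
  have hhigh : ρ ^ 2 * ∫ ξ in Sᶜ, ‖f ξ‖ ^ 2 ∂μ ≤ ∫ ξ, ‖ξ‖ ^ 2 * ‖f ξ‖ ^ 2 ∂μ := by
    rw [← integral_const_mul]
    refine (setIntegral_mono_ae_restrict (hf.const_mul _).integrableOn hfξ.integrableOn ?_).trans
      (setIntegral_le_integral hfξ (.of_forall fun ξ => by positivity))
    filter_upwards [ae_restrict_mem measurableSet_closedBall.compl] with ξ hξ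
    have : ρ ≤ ‖ξ‖ := by simpa [S] using (not_le.1 (mt mem_closedBall_zero_iff.2 hξ)).le
    gcongr
  rw [← integral_add_compl measurableSet_closedBall hf]
  nlinarith [sq_nonneg ρ]

lemma deriv_le_of_dissipation_s11 {F : Type*} [NormedAddCommGroup F] {f : EuclideanSpace ℝ (Fin 3) → F}
    (hf : Integrable (fun ξ => ‖f ξ‖ ^ 2)) (hfξ : Integrable (fun ξ => ‖ξ‖ ^ 2 * ‖f ξ‖ ^ 2))
    {K c w d : ℝ} (hK : 0 ≤ K) (hc : 0 ≤ c) (hw : 0 ≤ w)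
    (hbound : ∀ᵐ ξ, ‖f ξ‖ ≤ K * (1 + ‖ξ‖ * w)) (hd : d + c * ∫ ξ, ‖ξ‖ ^ 2 * ‖f ξ‖ ^ 2 ≤ 0)
    {ρ W : ℝ} (hρ : 0 < ρ) (hwW : w ≤ W) :
    d ≤ -(c * ρ ^ 2) * (∫ ξ, ‖f ξ‖ ^ 2) + c * ρ ^ 2 *
      (K ^ 2 * volume.real (ball (0 : EuclideanSpace ℝ (Fin 3)) 1) * ρ ^ 3 * (1 + ρ * W) ^ 2) := by
  have hsplit := sq_mul_integral_norm_sq_le hf hfξ hρ.le (B := K * (1 + ρ * W)) <| by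
    filter_upwards [hbound] with ξ hξ hξρ
    exact hξ.trans (by gcongr)
  rw [Measure.addHaar_real_closedBall volume 0 hρ.le, finrank_euclideanSpace_fin] at hsplit
  have := mul_le_mul_of_nonneg_left hsplit hc
  linarith

theorem decay_main_case2_general
    (v : ℝ → EuclideanSpace ℝ (Fin 3) → ℂ)
    (hL2 : ∀ t : ℝ, Integrable (fun ξ : EuclideanSpace ℝ (Fin 3) => ‖v t ξ‖ ^ 2))
    (C0 : ℝ) (hC0 : 0 < C0) (E' : ℝ → ℝ)
    (hE'int : ∀ t : ℝ, 0 ≤ t → IntervalIntegrable E' volume 0 t)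
    (hEAC : ∀ t : ℝ, 0 ≤ t →
      (∫ ξ, ‖v t ξ‖ ^ 2) = (∫ ξ, ‖v 0 ξ‖ ^ 2) + ∫ s in (0:ℝ)..t, E' s)
    (hDfin : ∀ᵐ t ∂(volume : Measure ℝ), 0 < t →
      Integrable (fun ξ : EuclideanSpace ℝ (Fin 3) => ‖ξ‖ ^ 2 * ‖v t ξ‖ ^ 2))
    (hdiss : ∀ᵐ t ∂(volume : Measure ℝ), 0 < t →
      E' t + C0 * ∫ ξ, ‖ξ‖ ^ 2 * ‖v t ξ‖ ^ 2 ≤ 0)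
    (α β : ℝ) (hα : 1 ≤ α) (hβ0 : 0 ≤ β) (hβ1 : β < 1) (hαβ : 2 - β < 2 * α)
    (K : ℝ) (hK : 0 < K)
    (hptw : ∀ t : ℝ, 0 ≤ t →
      ∀ᵐ ξ ∂(volume : Measure (EuclideanSpace ℝ (Fin 3))),
        ‖v t ξ‖ ≤ K * (1 + ‖ξ‖ *
          (1 + (∫ s in (0:ℝ)..t, (∫ η, ‖v s η‖ ^ 2) ^ (α / (2 - β))) ^ ((2 - β) / 2)
             + ∫ s in (0:ℝ)..t, ∫ η, ‖v s η‖ ^ 2))) :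
    ∃ C : ℝ, 0 < C ∧ ∀ t : ℝ, 0 ≤ t →
      (∫ ξ, ‖v t ξ‖ ^ 2) ≤ C * (1 + t) ^ (-(3 / 2) : ℝ) := by
  set E : ℝ → ℝ := fun t => ∫ ξ, ‖v t ξ‖ ^ 2
  have hβ2 : 0 < 2 - β := by linarith
  have hE0 : ∀ t, 0 ≤ E t := fun t => integral_nonneg fun _ => by positivity
  have hanti : AntitoneOn E (Ici 0) := antitoneOn_of_ae_deriv_nonpos hE'int hEAC <| by
    filter_upwards [hdiss] with s hs hs0
    have : 0 ≤ ∫ ξ, ‖ξ‖ ^ 2 * ‖v s ξ‖ ^ 2 := integral_nonneg fun _ => by positivity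
    nlinarith [hs hs0]
  have hG0 : ∀ s, 0 ≤ s → 0 ≤ 1 + (∫ u in (0 : ℝ)..s, E u ^ (α / (2 - β))) ^ ((2 - β) / 2)
      + ∫ u in (0 : ℝ)..s, E u := fun s hs => by
    have h1 := intervalIntegral.integral_nonneg (μ := volume) hs fun u _ => hE0 u
    have h2 := intervalIntegral.integral_nonneg (μ := volume) hs fun u _ =>
      Real.rpow_nonneg (hE0 u) (α / (2 - β))
    positivity
  refine FourierSplitting.isPolyBounded_three_halves (θ := α / (2 - β)) (q := (2 - β) / 2)
    (Q := K ^ 2 * volume.real (ball (0 : EuclideanSpace ℝ (Fin 3)) 1)) ?_ hC0 (by positivity)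
    hE0 hanti
    (by rw [lt_div_iff₀ hβ2]; linarith) (by positivity) (by linarith)
    (by rw [div_mul_div_cancel₀ hβ2.ne']; linarith)
  refine fourierSplitting_of_ae_deriv_le hE'int hEAC hC0.le hanti ?_
  filter_upwards [hDfin, hdiss] with s hs hds hs0 ρ W hρ hW
  exact deriv_le_of_dissipation_s11 (hL2 s) (hs hs0) hK.le hC0.le (hG0 s hs0.le) (hptw s hs0.le)
    (hds hs0) hρ hW

/-- Abstract form of the main `L²`-decay theorem in the case `11/5 ≤ p⁻ < 3`. If
`E(t) = ∫ |v(t,ξ)|² dξ` is locally absolutely continuous (encoded by `E t = E 0 + ∫₀ᵗ E'`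
with `E'` locally integrable), satisfies the dissipation inequality
`E'(t) + C₀ ∫ |ξ|²|v(t,ξ)|² dξ ≤ 0` a.e., `α ≥ 1`, `β ∈ [0,1)`, `2α > 2 - β`, and
`|v(t,ξ)| ≤ K (1 + |ξ|(1 + (∫₀ᵗ E(s)^{α/(2-β)} ds)^{(2-β)/2} + ∫₀ᵗ E(s) ds))` for all
`t ≥ 0` and a.e. `ξ`, then `E(t) ≤ C (1+t)^{-3/2}` for a constant
`C = C(K, C₀, E(0), α, β)`. -/
theorem decay_main_case2
    (v : ℝ → EuclideanSpace ℝ (Fin 3) → ℂ) (hv : Measurable (Function.uncurry v))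
    (hL2 : ∀ t : ℝ, Integrable (fun ξ : EuclideanSpace ℝ (Fin 3) => ‖v t ξ‖ ^ 2))
    (C0 : ℝ) (hC0 : 0 < C0) (E' : ℝ → ℝ)
    (hE'int : ∀ t : ℝ, 0 ≤ t → IntervalIntegrable E' volume 0 t)
    (hEAC : ∀ t : ℝ, 0 ≤ t →
      (∫ ξ, ‖v t ξ‖ ^ 2) = (∫ ξ, ‖v 0 ξ‖ ^ 2) + ∫ s in (0:ℝ)..t, E' s)
    (hDfin : ∀ᵐ t ∂(volume : Measure ℝ), 0 < t →
      Integrable (fun ξ : EuclideanSpace ℝ (Fin 3) => ‖ξ‖ ^ 2 * ‖v t ξ‖ ^ 2))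
    (hdiss : ∀ᵐ t ∂(volume : Measure ℝ), 0 < t →
      E' t + C0 * ∫ ξ, ‖ξ‖ ^ 2 * ‖v t ξ‖ ^ 2 ≤ 0)
    (α β : ℝ) (hα : 1 ≤ α) (hβ0 : 0 ≤ β) (hβ1 : β < 1) (hαβ : 2 - β < 2 * α)
    (K : ℝ) (hK : 0 < K)
    (hptw : ∀ t : ℝ, 0 ≤ t →
      ∀ᵐ ξ ∂(volume : Measure (EuclideanSpace ℝ (Fin 3))),
        ‖v t ξ‖ ≤ K * (1 + ‖ξ‖ *
          (1 + (∫ s in (0:ℝ)..t, (∫ η, ‖v s η‖ ^ 2) ^ (α / (2 - β))) ^ ((2 - β) / 2)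
             + ∫ s in (0:ℝ)..t, ∫ η, ‖v s η‖ ^ 2))) :
    ∃ C : ℝ, 0 < C ∧ ∀ t : ℝ, 0 ≤ t →
      (∫ ξ, ‖v t ξ‖ ^ 2) ≤ C * (1 + t) ^ (-(3 / 2) : ℝ) :=
  decay_main_case2_general v hL2 C0 hC0 E' hE'int hEAC hDfin hdiss α β hα hβ0 hβ1 hαβ K hK hptw
end

section
/- For each $t \ge 0$ let $v(t,\cdot) \in L^2(\mathbb{R}^3;\mathbb{C})$, and set $E(t) = \int_{\mathbb{R}^3} |v(t,\xi)|^2\,d\xi$, $y(t) = \int_{\mathbb{R}^3} |\xi|^2 |v(t,\xi)|^2\,d\xi$ and $z(t) = \int_{\mathbb{R}^3} |\xi|^4 |v(t,\xi)|^2\,d\xi$, assumed finite for every $t$. Suppose $y$ is locally absolutely continuous on $[0,\infty)$ with $y'(t) + z(t) \le 0$ for almost every $t > 0$, and that there is $K > 0$ with $E(t) \le K (1+t)^{-3/2}$ for all $t \ge 0$. Then there is a constant $C$, depending only on $y(0)$ and $K$, such that $y(t) \le C (1+t)^{-5/2}$ for all $t \ge 0$. -/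
open MeasureTheory Set

/-!
Splitting frequencies at level `c` gives `c y ≤ z + c² E`, so `y' + c y ≤ c² E` for every `c`.
On a dyadic interval `[a, 2a + 1]`, where `y` is nonincreasing, the choice `c = 10 / (1 + a)`
turns this into `11 y(2a + 1) ≤ y(a) + 100 K (1 + a)^{-5/2}`. Since `2^{5/2} < 6 < 11`,
induction along `a = 2^n - 1` propagates the bound `y ≤ M (1 + t)^{-5/2}` with
`M = y(0) + 200 K`, and monotonicity of `y` fills in the times between dyadic points.
-/

theorem mul_integral_norm_sq_mul_le {E F : Type*} [NormedAddCommGroup E] [MeasurableSpace E]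
    [NormedAddCommGroup F] {μ : Measure E} {f : E → F}
    (hf : Integrable (fun ξ => ‖f ξ‖ ^ 2) μ)
    (hf₂ : Integrable (fun ξ => ‖ξ‖ ^ 2 * ‖f ξ‖ ^ 2) μ)
    (hf₄ : Integrable (fun ξ => ‖ξ‖ ^ 4 * ‖f ξ‖ ^ 2) μ) (c : ℝ) :
    c * ∫ ξ, ‖ξ‖ ^ 2 * ‖f ξ‖ ^ 2 ∂μ ≤
      (∫ ξ, ‖ξ‖ ^ 4 * ‖f ξ‖ ^ 2 ∂μ) + c ^ 2 * ∫ ξ, ‖f ξ‖ ^ 2 ∂μ := by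
  rw [← integral_const_mul, ← integral_const_mul, ← integral_add hf₄ (hf.const_mul _)]
  refine integral_mono (hf₂.const_mul c) (hf₄.add (hf.const_mul _)) fun ξ => ?_
  nlinarith [mul_nonneg (add_nonneg (sq_nonneg (‖ξ‖ ^ 2 - c / 2)) (sq_nonneg c))
    (sq_nonneg ‖f ξ‖)]

theorem rpow_neg_five_halves_le_six_mul {x : ℝ} (hx : 0 ≤ x) :
    x ^ (-(5 / 2) : ℝ) ≤ 6 * (2 * x) ^ (-(5 / 2) : ℝ) := by
  have h2 : 1 ≤ 6 * (2 : ℝ) ^ (-(5 / 2) : ℝ) := by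
    have hsq : ((2 : ℝ) ^ (5 / 2 : ℝ)) ^ 2 = 32 := by
      rw [← Real.rpow_natCast, ← Real.rpow_mul zero_le_two]
      norm_num
    have hle : (2 : ℝ) ^ (5 / 2 : ℝ) ≤ 6 :=
      (pow_le_pow_iff_left₀ (by positivity) (by norm_num) two_ne_zero).1 (by norm_num [hsq])
    rw [Real.rpow_neg zero_le_two, ← div_eq_mul_inv, le_div_iff₀ (by positivity)]
    linarith
  rw [Real.mul_rpow zero_le_two hx, ← mul_assoc]
  exact le_mul_of_one_le_left (by positivity) h2

section DyadicDecay

variable {Y : ℝ → ℝ} {K : ℝ}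

theorem le_mul_two_pow_rpow_of_step (hY0 : 0 ≤ Y 0) (hK : 0 ≤ K)
    (hstep : ∀ a, 0 ≤ a → 11 * Y (2 * a + 1) ≤ Y a + 100 * K * (1 + a) ^ (-(5 / 2) : ℝ))
    (n : ℕ) : Y (2 ^ n - 1) ≤ (Y 0 + 200 * K) * ((2 : ℝ) ^ n) ^ (-(5 / 2) : ℝ) := by
  induction n with
  | zero => simpa using (by linarith : Y 0 ≤ Y 0 + 200 * K)
  | succ n ih =>
    have hstep_n := hstep (2 ^ n - 1) (by linarith [one_le_pow₀ (M₀ := ℝ) one_le_two (n := n)])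
    rw [show 2 * ((2 : ℝ) ^ n - 1) + 1 = 2 ^ (n + 1) - 1 by ring, add_sub_cancel] at hstep_n
    have hrpow := rpow_neg_five_halves_le_six_mul (pow_nonneg zero_le_two n)
    rw [← pow_succ'] at hrpow
    set p := ((2 : ℝ) ^ n) ^ (-(5 / 2) : ℝ)
    set q := ((2 : ℝ) ^ (n + 1)) ^ (-(5 / 2) : ℝ)
    have hq : 0 ≤ q := by positivity
    have h11 : 11 * Y (2 ^ (n + 1) - 1) ≤ 11 * ((Y 0 + 200 * K) * q) :=
      calc 11 * Y (2 ^ (n + 1) - 1) ≤ Y (2 ^ n - 1) + 100 * K * p := hstep_n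
        _ ≤ (Y 0 + 300 * K) * p := by linarith
        _ ≤ (Y 0 + 300 * K) * (6 * q) := mul_le_mul_of_nonneg_left hrpow (by linarith)
        _ ≤ 11 * ((Y 0 + 200 * K) * q) := by nlinarith
    linarith

theorem le_mul_one_add_rpow_of_step (hanti : AntitoneOn Y (Ici 0)) (hY0 : 0 ≤ Y 0)
    (hK : 0 ≤ K)
    (hstep : ∀ a, 0 ≤ a → 11 * Y (2 * a + 1) ≤ Y a + 100 * K * (1 + a) ^ (-(5 / 2) : ℝ))
    {t : ℝ} (ht : 0 ≤ t) :
    Y t ≤ 6 * (Y 0 + 200 * K) * (1 + t) ^ (-(5 / 2) : ℝ) := by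
  obtain ⟨n, hn, hn1⟩ := exists_nat_pow_near (by linarith : 1 ≤ 1 + t) one_lt_two
  have hM : 0 ≤ Y 0 + 200 * K := by linarith
  have hdyadic : (2 : ℝ) ^ n - 1 ∈ Ici 0 :=
    mem_Ici.2 (by linarith [one_le_pow₀ (M₀ := ℝ) one_le_two (n := n)])
  calc Y t ≤ Y (2 ^ n - 1) := hanti hdyadic ht (by linarith)
    _ ≤ (Y 0 + 200 * K) * ((2 : ℝ) ^ n) ^ (-(5 / 2) : ℝ) :=
      le_mul_two_pow_rpow_of_step hY0 hK hstep n
    _ ≤ (Y 0 + 200 * K) * (6 * ((2 : ℝ) ^ (n + 1)) ^ (-(5 / 2) : ℝ)) := by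
      rw [pow_succ']
      exact mul_le_mul_of_nonneg_left (rpow_neg_five_halves_le_six_mul (by positivity)) hM
    _ ≤ (Y 0 + 200 * K) * (6 * (1 + t) ^ (-(5 / 2) : ℝ)) :=
      mul_le_mul_of_nonneg_left (mul_le_mul_of_nonneg_left
        (Real.rpow_le_rpow_of_nonpos (by linarith) hn1.le (by norm_num)) (by norm_num)) hM
    _ = 6 * (Y 0 + 200 * K) * (1 + t) ^ (-(5 / 2) : ℝ) := by ring

end DyadicDecay

section AbsolutelyContinuous

variable {Y Y' : ℝ → ℝ}

theorem sub_le_intervalIntegral_of_ae_le {g : ℝ → ℝ}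
    (hY'int : ∀ t, 0 ≤ t → IntervalIntegrable Y' volume 0 t)
    (hYAC : ∀ t, 0 ≤ t → Y t = Y 0 + ∫ s in (0 : ℝ)..t, Y' s)
    {a b : ℝ} (ha : 0 ≤ a) (hab : a ≤ b) (hg : IntervalIntegrable g volume a b)
    (hle : ∀ᵐ s, s ∈ Ioc a b → Y' s ≤ g s) :
    Y b - Y a ≤ ∫ s in a..b, g s := by
  have hb : 0 ≤ b := ha.trans hab
  calc Y b - Y a = ∫ s in a..b, Y' s := by
        rw [hYAC b hb, hYAC a ha, add_sub_add_left_eq_sub,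
          intervalIntegral.integral_interval_sub_left (hY'int b hb) (hY'int a ha)]
    _ ≤ ∫ s in a..b, g s := by
        rw [intervalIntegral.integral_of_le hab, intervalIntegral.integral_of_le hab]
        exact setIntegral_mono_ae_restrict ((hY'int a ha).symm.trans (hY'int b hb)).1 hg.1
          ((ae_restrict_iff' measurableSet_Ioc).2 hle)

variable {E : ℝ → ℝ}

theorem antitoneOn_Ici_of_ae_deriv_add_mul_le
    (hY'int : ∀ t, 0 ≤ t → IntervalIntegrable Y' volume 0 t)
    (hYAC : ∀ t, 0 ≤ t → Y t = Y 0 + ∫ s in (0 : ℝ)..t, Y' s)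
    (hineq : ∀ᵐ t, 0 < t → ∀ c, Y' t + c * Y t ≤ c ^ 2 * E t) : AntitoneOn Y (Ici 0) := by
  intro a ha b _ hab
  have hsub := sub_le_intervalIntegral_of_ae_le (g := fun _ => 0) hY'int hYAC ha hab
    intervalIntegrable_const ?_
  · simp only [intervalIntegral.integral_zero] at hsub
    linarith
  · filter_upwards [hineq] with s hs hsab
    simpa using hs (lt_of_le_of_lt ha hsab.1) 0

theorem eleven_mul_le_of_ae_deriv_add_mul_le
    (hY'int : ∀ t, 0 ≤ t → IntervalIntegrable Y' volume 0 t)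
    (hYAC : ∀ t, 0 ≤ t → Y t = Y 0 + ∫ s in (0 : ℝ)..t, Y' s)
    (hineq : ∀ᵐ t, 0 < t → ∀ c, Y' t + c * Y t ≤ c ^ 2 * E t) {K : ℝ} (hK : 0 ≤ K)
    (hE : ∀ t, 0 ≤ t → E t ≤ K * (1 + t) ^ (-(3 / 2) : ℝ)) {a : ℝ} (ha : 0 ≤ a) :
    11 * Y (2 * a + 1) ≤ Y a + 100 * K * (1 + a) ^ (-(5 / 2) : ℝ) := by
  set c := 10 / (1 + a) with hc_def
  set Ka := K * (1 + a) ^ (-(3 / 2) : ℝ) with hKa_def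
  have hanti := antitoneOn_Ici_of_ae_deriv_add_mul_le hY'int hYAC hineq
  have hsub := sub_le_intervalIntegral_of_ae_le (g := fun _ => -(c * Y (2 * a + 1)) + c ^ 2 * Ka)
    (b := 2 * a + 1) hY'int hYAC ha (by linarith) intervalIntegrable_const ?_
  · rw [intervalIntegral.integral_const, smul_eq_mul] at hsub
    have hc : c * (2 * a + 1 - a) = 10 := by rw [hc_def]; field_simp; ring
    have hKa : c ^ 2 * Ka * (2 * a + 1 - a) = 100 * K * (1 + a) ^ (-(5 / 2) : ℝ) := by
      rw [hc_def, hKa_def, show (-(5 / 2) : ℝ) = -1 + -(3 / 2) by norm_num,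
        Real.rpow_add (by linarith), Real.rpow_neg_one]
      field_simp
      ring
    have hsub' : Y (2 * a + 1) - Y a ≤
        -(c * (2 * a + 1 - a)) * Y (2 * a + 1) + c ^ 2 * Ka * (2 * a + 1 - a) := by
      convert hsub using 1; ring
    rw [hc, hKa] at hsub'
    linarith
  · filter_upwards [hineq] with s hs hsab
    have hs0 : 0 < s := ha.trans_lt hsab.1
    have hYs : c * Y (2 * a + 1) ≤ c * Y s :=
      mul_le_mul_of_nonneg_left (hanti hs0.le (mem_Ici.2 (by linarith)) hsab.2)
        (by positivity)
    have hEs : E s ≤ Ka := (hE s hs0.le).trans <| mul_le_mul_of_nonneg_left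
      (Real.rpow_le_rpow_of_nonpos (by linarith) (by linarith [hsab.1]) (by norm_num)) hK
    nlinarith [hs hs0 c, mul_le_mul_of_nonneg_left hEs (sq_nonneg c)]

end AbsolutelyContinuous

/-- Abstract (Fourier-side) form of the second main theorem. With
`E(t) = ∫ |v(t,ξ)|² dξ`, `y(t) = ∫ |ξ|²|v(t,ξ)|² dξ`, `z(t) = ∫ |ξ|⁴|v(t,ξ)|² dξ`
all finite, if `y` is locally absolutely continuous (encoded by `y t = y 0 + ∫₀ᵗ y'`
with `y'` locally integrable) with `y'(t) + z(t) ≤ 0` a.e., and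
`E(t) ≤ K (1+t)^{-3/2}`, then `y(t) ≤ C (1+t)^{-5/2}` for a constant
`C = C(y(0), K)`. -/
theorem gradient_decay_abstract
    (v : ℝ → EuclideanSpace ℝ (Fin 3) → ℂ)
    (hL2 : ∀ t : ℝ, Integrable (fun ξ : EuclideanSpace ℝ (Fin 3) => ‖v t ξ‖ ^ 2))
    (hy : ∀ t : ℝ, Integrable (fun ξ : EuclideanSpace ℝ (Fin 3) => ‖ξ‖ ^ 2 * ‖v t ξ‖ ^ 2))
    (hz : ∀ t : ℝ, Integrable (fun ξ : EuclideanSpace ℝ (Fin 3) => ‖ξ‖ ^ 4 * ‖v t ξ‖ ^ 2))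
    (y' : ℝ → ℝ)
    (hy'int : ∀ t : ℝ, 0 ≤ t → IntervalIntegrable y' volume 0 t)
    (hyAC : ∀ t : ℝ, 0 ≤ t →
      (∫ ξ, ‖ξ‖ ^ 2 * ‖v t ξ‖ ^ 2) = (∫ ξ, ‖ξ‖ ^ 2 * ‖v 0 ξ‖ ^ 2) + ∫ s in (0:ℝ)..t, y' s)
    (hdiss : ∀ᵐ t ∂(volume : Measure ℝ), 0 < t →
      y' t + (∫ ξ, ‖ξ‖ ^ 4 * ‖v t ξ‖ ^ 2) ≤ 0)
    (K : ℝ) (hK : 0 < K)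
    (hE : ∀ t : ℝ, 0 ≤ t → (∫ ξ, ‖v t ξ‖ ^ 2) ≤ K * (1 + t) ^ (-(3 / 2) : ℝ)) :
    ∃ C : ℝ, 0 < C ∧ ∀ t : ℝ, 0 ≤ t →
      (∫ ξ, ‖ξ‖ ^ 2 * ‖v t ξ‖ ^ 2) ≤ C * (1 + t) ^ (-(5 / 2) : ℝ) := by
  have hineq : ∀ᵐ t, 0 < t → ∀ c, y' t + c * (∫ ξ, ‖ξ‖ ^ 2 * ‖v t ξ‖ ^ 2) ≤
      c ^ 2 * ∫ ξ, ‖v t ξ‖ ^ 2 := by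
    filter_upwards [hdiss] with t hdiss_t ht c
    linarith [hdiss_t ht, mul_integral_norm_sq_mul_le (hL2 t) (hy t) (hz t) c]
  have hY0 : 0 ≤ ∫ ξ, ‖ξ‖ ^ 2 * ‖v 0 ξ‖ ^ 2 := integral_nonneg fun ξ => by positivity
  refine ⟨6 * ((∫ ξ, ‖ξ‖ ^ 2 * ‖v 0 ξ‖ ^ 2) + 200 * K), by positivity, fun t ht => ?_⟩
  exact le_mul_one_add_rpow_of_step (antitoneOn_Ici_of_ae_deriv_add_mul_le hy'int hyAC hineq)
    hY0 hK.le (fun a ha => eleven_mul_le_of_ae_deriv_add_mul_le hy'int hyAC hineq hK.le hE ha) ht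
end
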